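/- arXiv:math/0108103 — 7 statements merged into one kernel-verified Lean document; each statement's English description precedes it below -/
import Mathlib

section
/- Let g = [[A,B],[-B,A]] be a unitary matrix (A+iB ∈ U(n)) viewed inside Sp(2n,ℝ), and suppose g·τ(g) = I, where τ(g) = I₋ g I₋. Then there exists δ ∈ U(n) (viewed in Sp(2n,ℝ)) such that g = τ(δ)·δ⁻¹. -/
noncomputable section
open Matrix Complex

/-- 2n×2n real matrices in n×n block form. -/
abbrev SpMat (n : ℕ) := Matrix (Fin n ⊕ Fin n) (Fin n ⊕ Fin n) ℝ

/-- The standard symplectic form J = [[0,I],[-I,0]]. -/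
def J (n : ℕ) : SpMat n := fromBlocks 0 1 (-1) 0

/-- I₋ = diag(-Iₙ, Iₙ). -/
def Iminus (n : ℕ) : SpMat n := fromBlocks (-1) 0 0 1

/-- The real symplectic group Sp(2n,ℝ). -/
def Sp (n : ℕ) : Set (SpMat n) := {g | gᵀ * J n * g = J n}

/-- The involution τ(g) = I₋ g I₋. -/
def tau {n : ℕ} (g : SpMat n) : SpMat n := Iminus n * g * Iminus n

/-!
Writing `g = [[A, B], [-B, A]]` as the complex matrix `C = A + iB`, the hypotheses say that `C` is
unitary with `C C̄ = 1`, so `C̄ = C⁻¹ = Cᴴ` is symmetric, and we need a unitary `D` with `D̄ = C D`.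
For every `z`, the symmetric matrix `D₀ = z̄ + z C̄` satisfies `D̄₀ = C D₀`, and `z` can be chosen so
that `D₀` is invertible. Then `D₀ᴴ D₀ = C D₀ D₀` is symmetric, as `D₀` commutes with `C`, hence real;
so the inverse square root `H` of this positive matrix is real and `D = D₀ H` is unitary with
`D̄ = C D`.
-/

open scoped ComplexOrder MatrixOrder

namespace Matrix

variable {m : Type*} [Fintype m] [DecidableEq m]

def realBlock : Matrix m m ℂ →+* Matrix (m ⊕ m) (m ⊕ m) ℝ where
  toFun C := fromBlocks (C.map re) (C.map im) (-C.map im) (C.map re)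
  map_one' := by ext (i | i) (j | j) <;> by_cases h : i = j <;> simp [one_apply, h]
  map_zero' := by ext (i | i) (j | j) <;> simp
  map_add' C D := by ext (i | i) (j | j) <;> simp [add_comm]
  map_mul' C D := by
    ext (i | i) (j | j) <;>
      simp [mul_apply, Finset.sum_sub_distrib, Finset.sum_add_distrib] <;> ring

theorem realBlock_apply (C : Matrix m m ℂ) :
    realBlock C = fromBlocks (C.map re) (C.map im) (-C.map im) (C.map re) := rfl

theorem realBlock_injective : Function.Injective (realBlock : Matrix m m ℂ → _) := by
  intro C D h
  obtain ⟨hre, him, -, -⟩ := fromBlocks_inj.1 h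
  ext i j
  exact Complex.ext (congrFun₂ hre i j) (congrFun₂ him i j)

theorem realBlock_conjTranspose (C : Matrix m m ℂ) : realBlock Cᴴ = (realBlock C)ᵀ := by
  ext (i | i) (j | j) <;> simp [realBlock_apply]

theorem realBlock_I_smul_one : realBlock (I • 1 : Matrix m m ℂ) = fromBlocks 0 1 (-1) 0 := by
  ext (i | i) (j | j) <;> by_cases h : i = j <;> simp [realBlock_apply, h]

theorem realBlock_ofReal_add_I_smul (A B : Matrix m m ℝ) :
    realBlock (A.map ofReal + I • B.map ofReal) = fromBlocks A B (-B) A := by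
  ext (i | i) (j | j) <;> simp [realBlock_apply]

theorem exists_isUnit_star_smul_one_add_smul (X : Matrix m m ℂ) :
    ∃ z : ℂ, IsUnit (star z • (1 : Matrix m m ℂ) + z • X) := by
  have hne (t : ℝ) : (t : ℂ) + I ≠ 0 := fun h => by simpa using congrArg im h
  -- a Möbius map, injective on `ℝ`, so its range escapes the finite spectrum of `X`
  set μ : ℝ → ℂ := fun t => -((t - I) / (t + I))
  have hμ : Function.Injective μ := by
    intro s t h
    simp only [μ, neg_inj, div_eq_div_iff (hne s) (hne t)] at h
    have him := congrArg im h
    simp at him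
    linarith
  obtain ⟨_, ⟨t, rfl⟩, ht⟩ :=
    (Set.infinite_range_of_injective hμ).exists_notMem_finite X.finite_spectrum
  refine ⟨t + I, ?_⟩
  have hscalar : ((t : ℂ) + I) * μ t = -star ((t : ℂ) + I) := by
    simp only [μ, mul_neg, mul_div_cancel₀ _ (hne t)]
    simp [Complex.ext_iff]
  have hfactor : star ((t : ℂ) + I) • (1 : Matrix m m ℂ) + ((t : ℂ) + I) • X =
      algebraMap ℂ _ ((t : ℂ) + I) * -(algebraMap ℂ _ (μ t) - X) := by
    rw [← Algebra.smul_def, neg_sub, smul_sub, Algebra.algebraMap_eq_smul_one, smul_smul, hscalar,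
      neg_smul, sub_neg_eq_add, add_comm]
  rw [hfactor]
  exact ((hne t).isUnit.map _).mul (spectrum.notMem_iff.1 ht).neg

theorem sqrt_transpose {𝕜 : Type*} [RCLike 𝕜] {M : Matrix m m 𝕜} (hM : 0 ≤ M) :
    (CFC.sqrt M)ᵀ = CFC.sqrt Mᵀ :=
  (CFC.sqrt_unique (by rw [← transpose_mul, CFC.sqrt_mul_sqrt_self M])
    (CFC.sqrt_nonneg M).posSemidef.transpose.nonneg).symm

theorem exists_map_conj_eq_self_mul_mem_unitaryGroup {D₀ : Matrix m m ℂ} (hD₀ : IsUnit D₀)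
    (hsymm : (D₀ᴴ * D₀)ᵀ = D₀ᴴ * D₀) :
    ∃ H : Matrix m m ℂ, H.map (starRingEnd ℂ) = H ∧ D₀ * H ∈ unitaryGroup m ℂ := by
  set M := D₀ᴴ * D₀
  have hM : M⁻¹.PosSemidef := (posSemidef_conjTranspose_mul_self D₀).inv
  have hMunit : IsUnit M := hD₀.star.mul hD₀
  set H := CFC.sqrt M⁻¹
  have hHH : H * H = M⁻¹ := CFC.sqrt_mul_sqrt_self _ hM.nonneg
  have hHherm : Hᴴ = H := (CFC.sqrt_nonneg _).posSemidef.isHermitian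
  have hHT : Hᵀ = H := by rw [sqrt_transpose hM.nonneg, transpose_nonsing_inv, hsymm]
  have hHMH : H * M * H = 1 := by
    have : H * (H * M) = 1 := by
      rw [← mul_assoc, hHH, nonsing_inv_mul _ ((isUnit_iff_isUnit_det M).1 hMunit)]
    rw [mul_eq_one_comm.1 this]
  refine ⟨H, ?_, ?_⟩
  · calc H.map (starRingEnd ℂ) = Hᴴᵀ := rfl
      _ = H := by rw [hHherm, hHT]
  · rw [mem_unitaryGroup_iff', star_eq_conjTranspose, conjTranspose_mul, hHherm, ← hHMH]
    simp only [M, mul_assoc]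

theorem exists_mem_unitaryGroup_map_conj_eq_mul {C : Matrix m m ℂ} (hC : C ∈ unitaryGroup m ℂ)
    (hCC : C * C.map (starRingEnd ℂ) = 1) :
    ∃ D ∈ unitaryGroup m ℂ, D.map (starRingEnd ℂ) = C * D := by
  set Cbar := C.map (starRingEnd ℂ)
  have hCbar : Cbar = Cᴴ := (left_inv_eq_right_inv (mem_unitaryGroup_iff'.1 hC) hCC).symm
  have hCbarC : Cbar * C = 1 := hCbar ▸ mem_unitaryGroup_iff'.1 hC
  have hCbarT : Cbarᵀ = Cbar := by
    calc Cbarᵀ = Cᴴᵀ := by rw [hCbar]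
      _ = Cbar := rfl
  obtain ⟨z, hz⟩ := exists_isUnit_star_smul_one_add_smul Cbar
  set D₀ := star z • 1 + z • Cbar
  have hD₀T : D₀ᵀ = D₀ := by simp [D₀, hCbarT]
  have hD₀conj : D₀.map (starRingEnd ℂ) = C * D₀ := by
    calc D₀.map (starRingEnd ℂ) = z • 1 + star z • C := by
          ext i j
          by_cases h : i = j <;> simp [D₀, Cbar, h]
      _ = C * D₀ := by rw [mul_add, Matrix.mul_smul, Matrix.mul_smul, hCC, mul_one, add_comm]
  have hD₀C : D₀ * C = C * D₀ := by
    simp only [D₀, add_mul, mul_add, Matrix.smul_mul, Matrix.mul_smul, one_mul, mul_one, hCC,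
      hCbarC]
  have hD₀H : D₀ᴴ = C * D₀ := by
    calc D₀ᴴ = D₀ᵀᴴ := by rw [hD₀T]
      _ = C * D₀ := hD₀conj
  have hsymm : (D₀ᴴ * D₀)ᵀ = D₀ᴴ * D₀ := by
    rw [transpose_mul, hD₀T]
    change D₀ * D₀.map (starRingEnd ℂ) = _
    rw [hD₀conj, hD₀H, ← mul_assoc, hD₀C]
  obtain ⟨H, hHconj, hU⟩ := exists_map_conj_eq_self_mul_mem_unitaryGroup hz hsymm
  exact ⟨D₀ * H, hU, by rw [Matrix.map_mul, hD₀conj, hHconj, mul_assoc]⟩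

end Matrix

theorem realBlock_mem_Sp_iff {n : ℕ} {C : Matrix (Fin n) (Fin n) ℂ} :
    realBlock C ∈ Sp n ↔ C ∈ unitaryGroup (Fin n) ℂ := by
  have hI : Cᴴ * (I • 1) * C = I • (Cᴴ * C) := by simp
  change (realBlock C)ᵀ * _root_.J n * realBlock C = _root_.J n ↔ _
  rw [_root_.J, ← realBlock_I_smul_one, ← realBlock_conjTranspose, ← map_mul,
    ← map_mul, realBlock_injective.eq_iff, hI, (smul_right_injective _ I_ne_zero).eq_iff,
    mem_unitaryGroup_iff', star_eq_conjTranspose]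

theorem tau_realBlock {n : ℕ} (C : Matrix (Fin n) (Fin n) ℂ) :
    tau (realBlock C) = realBlock (C.map (starRingEnd ℂ)) := by
  simp only [tau, Iminus, realBlock_apply, fromBlocks_multiply]
  ext (i | i) (j | j) <;> simp

/-- If g ∈ U(n) ⊂ Sp(2n,ℝ) satisfies g·τ(g) = 1 then g = τ(δ)δ⁻¹ for some δ ∈ U(n). -/
theorem unitary_cocycle_trivial (n : ℕ) (A B : Matrix (Fin n) (Fin n) ℝ)
    (hU : fromBlocks A B (-B) A ∈ Sp n)
    (hc : fromBlocks A B (-B) A * tau (fromBlocks A B (-B) A) = 1) :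
    ∃ P Q : Matrix (Fin n) (Fin n) ℝ, fromBlocks P Q (-Q) P ∈ Sp n ∧
      fromBlocks A B (-B) A = tau (fromBlocks P Q (-Q) P) * (fromBlocks P Q (-Q) P)⁻¹ := by
  rw [← realBlock_ofReal_add_I_smul] at hU hc ⊢
  set C := A.map ofReal + I • B.map ofReal
  have hCC : C * C.map (starRingEnd ℂ) = 1 :=
    realBlock_injective (by rwa [map_mul, ← tau_realBlock, map_one])
  obtain ⟨D, hD, hDC⟩ := exists_mem_unitaryGroup_map_conj_eq_mul (realBlock_mem_Sp_iff.1 hU) hCC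
  have hDinv : realBlock D * realBlock Dᴴ = 1 := by
    rw [← map_mul, ← star_eq_conjTranspose, Unitary.mul_star_self_of_mem hD, map_one]
  refine ⟨D.map re, D.map im, realBlock_mem_Sp_iff.2 hD, ?_⟩
  change realBlock C = tau (realBlock D) * (realBlock D)⁻¹
  rw [tau_realBlock, hDC, map_mul, mul_assoc,
    mul_nonsing_inv _ (isUnit_det_of_right_inverse hDinv), mul_one]
end
end

section
/- Let C be an invertible diagonal real n×n matrix and γ = [[0,-C⁻¹],[C,0]] ∈ Sp(2n,ℝ). Then there exists Z in the Siegel upper half space 𝔥ₙ with γ·Z = -conj(Z); explicitly Z = iY where Y = diag(|c₁|⁻¹,…,|cₙ|⁻¹) for C = diag(c₁,…,cₙ). -/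
noncomputable section
open Matrix Complex

/-- The Siegel upper half space: symmetric complex matrices with positive definite
imaginary part. -/
def Siegel (n : ℕ) : Set (Matrix (Fin n) (Fin n) ℂ) :=
  {Z | Zᵀ = Z ∧ (Matrix.of fun i j => (Z i j).im).PosDef}

/-- The action of Sp(2n,ℝ) on the Siegel space by fractional linear transformations
g·Z = (AZ+B)(CZ+D)⁻¹. -/
def act {n : ℕ} (g : SpMat n) (Z : Matrix (Fin n) (Fin n) ℂ) : Matrix (Fin n) (Fin n) ℂ :=
  (g.toBlocks₁₁.map Complex.ofReal * Z + g.toBlocks₁₂.map Complex.ofReal) *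
    (g.toBlocks₂₁.map Complex.ofReal * Z + g.toBlocks₂₂.map Complex.ofReal)⁻¹

/-- Entrywise complex conjugation of a matrix. -/
def conjM {n : ℕ} (Z : Matrix (Fin n) (Fin n) ℂ) : Matrix (Fin n) (Fin n) ℂ :=
  Z.map (starRingEnd ℂ)

/-! For γ = [[0,-C⁻¹],[C,0]] the action is γ·Z = -C⁻¹Z⁻¹C⁻¹. When C = diag(cᵢ) and Z = diag(zᵢ)
everything is entrywise, γ·Z = diag(-(cᵢ² zᵢ)⁻¹), and for zᵢ = i/|cᵢ| this is
-(i|cᵢ|)⁻¹ = i/|cᵢ| = -conj(zᵢ), using cᵢ² = |cᵢ|². -/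

open ComplexConjugate

lemma I_smul_map_ofReal_mem_Siegel {n : ℕ} {Y : Matrix (Fin n) (Fin n) ℝ} (hY : Y.PosDef) :
    Complex.I • Y.map Complex.ofReal ∈ Siegel n := by
  have hsymm : Yᵀ = Y := hY.isHermitian
  refine ⟨by rw [transpose_smul, ← transpose_map, hsymm], ?_⟩
  convert hY using 1
  ext i j
  simp

lemma I_smul_map_ofReal_diagonal {n : ℕ} (y : Fin n → ℝ) :
    Complex.I • (diagonal y).map Complex.ofReal = diagonal fun i => Complex.I * y i := by
  rw [diagonal_map ofReal_zero, ← diagonal_smul]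
  rfl

lemma conjM_diagonal {n : ℕ} (z : Fin n → ℂ) :
    conjM (diagonal z) = diagonal fun i => conj (z i) :=
  diagonal_map (map_zero _)

lemma act_fromBlocks_zero_zero {n : ℕ} (B C : Matrix (Fin n) (Fin n) ℝ)
    (Z : Matrix (Fin n) (Fin n) ℂ) :
    act (fromBlocks 0 B C 0) Z = B.map Complex.ofReal * (C.map Complex.ofReal * Z)⁻¹ := by
  simp [act]

lemma inv_diagonal_of_ne_zero {n : Type*} [Fintype n] [DecidableEq n] {K : Type*} [Field K]
    {v : n → K} (hv : ∀ i, v i ≠ 0) : (diagonal v)⁻¹ = diagonal fun i => (v i)⁻¹ := by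
  refine inv_eq_right_inv ?_
  rw [diagonal_mul_diagonal, ← diagonal_one]
  exact congrArg diagonal (funext fun i => mul_inv_cancel₀ (hv i))

lemma act_antidiagonal_diagonal {n : ℕ} {d : Fin n → ℝ} {z : Fin n → ℂ} (hd : ∀ i, d i ≠ 0)
    (hz : ∀ i, z i ≠ 0) :
    act (fromBlocks 0 (-(diagonal d)⁻¹) (diagonal d) 0) (diagonal z) =
      diagonal fun i => -((d i : ℂ) ^ 2 * z i)⁻¹ := by
  have hdz : ∀ i, (d i : ℂ) * z i ≠ 0 := fun i => mul_ne_zero (ofReal_ne_zero.mpr (hd i)) (hz i)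
  rw [act_fromBlocks_zero_zero, inv_diagonal_of_ne_zero hd, diagonal_neg,
    diagonal_map ofReal_zero, diagonal_map ofReal_zero, diagonal_mul_diagonal,
    inv_diagonal_of_ne_zero hdz, diagonal_mul_diagonal]
  congr 1
  funext i
  push_cast
  ring

lemma neg_inv_sq_mul_I_mul_abs_inv {x : ℝ} (hx : x ≠ 0) :
    -((x : ℂ) ^ 2 * (Complex.I * ((|x|⁻¹ : ℝ) : ℂ)))⁻¹ = -conj (Complex.I * ((|x|⁻¹ : ℝ) : ℂ)) := by
  have habs : ((|x| : ℝ) : ℂ) ≠ 0 := ofReal_ne_zero.mpr (abs_ne_zero.mpr hx)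
  have hsq : (x : ℂ) ^ 2 = ((|x| : ℝ) : ℂ) ^ 2 := by rw [← ofReal_pow, ← ofReal_pow, sq_abs]
  rw [hsq, map_mul, conj_I, conj_ofReal, ofReal_inv]
  field_simp
  linear_combination -I_sq

/-- For γ = [[0,-C⁻¹],[C,0]] with C invertible diagonal, the point
Z = i·diag(|c₁|⁻¹,…,|cₙ|⁻¹) of the Siegel space satisfies γ·Z = -conj(Z). -/
theorem diagonal_cocycle_real_point (n : ℕ) (d : Fin n → ℝ) (hd : ∀ i, d i ≠ 0) :
    (Complex.I • (diagonal fun i => |d i|⁻¹).map Complex.ofReal) ∈ Siegel n ∧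
    act (fromBlocks 0 (-(diagonal d)⁻¹) (diagonal d) 0)
        (Complex.I • (diagonal fun i => |d i|⁻¹).map Complex.ofReal)
      = -(conjM (Complex.I • (diagonal fun i => |d i|⁻¹).map Complex.ofReal)) := by
  have hy : ∀ i, 0 < |d i|⁻¹ := fun i => inv_pos.mpr (abs_pos.mpr (hd i))
  have hz : ∀ i, Complex.I * ((|d i|⁻¹ : ℝ) : ℂ) ≠ 0 := fun i =>
    mul_ne_zero I_ne_zero (ofReal_ne_zero.mpr (hy i).ne')
  refine ⟨I_smul_map_ofReal_mem_Siegel (posDef_diagonal_iff.mpr hy), ?_⟩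
  rw [I_smul_map_ofReal_diagonal, act_antidiagonal_diagonal hd hz, conjM_diagonal, diagonal_neg]
  exact congrArg diagonal (funext fun i => neg_inv_sq_mul_I_mul_abs_inv (hd i))
end
end

section
/- The nonabelian Galois cohomology set H¹(Gal(ℂ/ℝ), Sp(2n,ℝ)) with respect to the action of the nontrivial Galois element by τ(g) = I₋ g I₋ is trivial: every γ ∈ Sp(2n,ℝ) with γ·τ(γ) = I can be written γ = τ(h)·h⁻¹ for some h ∈ Sp(2n,ℝ). -/
noncomputable section
open Matrix Complex

lemma spIminus_transpose (n : ℕ) : (Iminus n)ᵀ = Iminus n := by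
  simp [Iminus, fromBlocks_transpose]

lemma spIminus_mul_Iminus (n : ℕ) : Iminus n * Iminus n = 1 := by
  rw [← fromBlocks_one]; simp [Iminus, fromBlocks_multiply]

lemma spJ_transpose (n : ℕ) : (J n)ᵀ = -(J n) := by
  rw [show (J n : SpMat n) = fromBlocks 0 1 (-1) 0 from rfl, fromBlocks_transpose,
    fromBlocks_neg]
  simp

lemma spJ_mul_J (n : ℕ) : J n * J n = -1 := by
  rw [show (J n : SpMat n) = fromBlocks 0 1 (-1) 0 from rfl, ← fromBlocks_one, fromBlocks_neg,
    fromBlocks_multiply]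
  simp

lemma spIminus_J_Iminus (n : ℕ) : Iminus n * J n * Iminus n = -(J n) := by
  rw [show (J n : SpMat n) = fromBlocks 0 1 (-1) 0 from rfl, fromBlocks_neg]
  simp [Iminus, fromBlocks_multiply]

lemma sp_dot_shift {n : ℕ} (A : SpMat n) (x y : (Fin n ⊕ Fin n) → ℝ) :
    (A *ᵥ x) ⬝ᵥ y = x ⬝ᵥ (Aᵀ *ᵥ y) := by
  rw [dotProduct_comm, dotProduct_mulVec, dotProduct_comm, mulVec_transpose]

lemma sp_key (n : ℕ) (B : SpMat n) (hB2 : B * B = 1)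
    (hBJ : Bᵀ * J n * B = -(J n)) :
    ∃ h : SpMat n, hᵀ * J n * h = J n ∧ B * h = h * Iminus n := by
  classical
  have hJdef : J n = fromBlocks 0 1 (-1) 0 := rfl
  set Vm : Submodule ℝ ((Fin n ⊕ Fin n) → ℝ) := LinearMap.ker (Matrix.mulVecLin (B + 1)) with hVmdef
  set Vp : Submodule ℝ ((Fin n ⊕ Fin n) → ℝ) := LinearMap.ker (Matrix.mulVecLin (B - 1)) with hVpdef
  have memVm : ∀ x : (Fin n ⊕ Fin n) → ℝ, x ∈ Vm ↔ B *ᵥ x = -x := by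
    intro x
    simp [hVmdef, LinearMap.mem_ker, Matrix.mulVecLin_apply, Matrix.add_mulVec,
      Matrix.one_mulVec, add_eq_zero_iff_eq_neg]
  have memVp : ∀ x : (Fin n ⊕ Fin n) → ℝ, x ∈ Vp ↔ B *ᵥ x = x := by
    intro x
    simp [hVpdef, LinearMap.mem_ker, Matrix.mulVecLin_apply, Matrix.sub_mulVec,
      Matrix.one_mulVec, sub_eq_zero]
  have hBB : ∀ x : (Fin n ⊕ Fin n) → ℝ, B *ᵥ (B *ᵥ x) = x := by
    intro x; rw [Matrix.mulVec_mulVec, hB2, Matrix.one_mulVec]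
  have hcompl : IsCompl Vm Vp := by
    constructor
    · rw [disjoint_iff, Submodule.eq_bot_iff]
      rintro x hx
      obtain ⟨h1, h2⟩ := Submodule.mem_inf.mp hx
      rw [memVm] at h1; rw [memVp] at h2
      have e : x = -x := h2.symm.trans h1
      have h4 : (2 : ℝ) • x = 0 := by
        rw [two_smul]; nth_rewrite 2 [e]; simp
      simpa using (smul_eq_zero.mp h4).resolve_left (by norm_num)
    · rw [codisjoint_iff, eq_top_iff]
      intro x _
      refine Submodule.mem_sup.mpr ⟨(2⁻¹ : ℝ) • (x - B *ᵥ x), ?_, (2⁻¹ : ℝ) • (x + B *ᵥ x), ?_, ?_⟩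
      · rw [memVm, Matrix.mulVec_smul, Matrix.mulVec_sub, hBB]
        module
      · rw [memVp, Matrix.mulVec_smul, Matrix.mulVec_add, hBB]
        module
      · module
  have homega : ∀ x y : (Fin n ⊕ Fin n) → ℝ, (B *ᵥ x) ⬝ᵥ (J n) *ᵥ (B *ᵥ y) = -(x ⬝ᵥ (J n) *ᵥ y) := by
    intro x y
    rw [sp_dot_shift, Matrix.mulVec_mulVec, Matrix.mulVec_mulVec, hBJ,
      Matrix.neg_mulVec, dotProduct_neg]
  have hanti : ∀ x y : (Fin n ⊕ Fin n) → ℝ, y ⬝ᵥ (J n) *ᵥ x = -(x ⬝ᵥ (J n) *ᵥ y) := by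
    intro x y
    rw [dotProduct_comm, sp_dot_shift, spJ_transpose, Matrix.neg_mulVec, dotProduct_neg]
  have isom : ∀ x ∈ Vm, ∀ y ∈ Vm, x ⬝ᵥ (J n) *ᵥ y = 0 := by
    intro x hx y hy
    have := homega x y
    rw [(memVm x).1 hx, (memVm y).1 hy, Matrix.mulVec_neg, dotProduct_neg, neg_dotProduct,
      neg_neg] at this
    linarith
  have isop : ∀ x ∈ Vp, ∀ y ∈ Vp, x ⬝ᵥ (J n) *ᵥ y = 0 := by
    intro x hx y hy
    have := homega x y
    rw [(memVp x).1 hx, (memVp y).1 hy] at this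
    linarith
  have hnd : ∀ y : (Fin n ⊕ Fin n) → ℝ, (∀ x : (Fin n ⊕ Fin n) → ℝ, x ⬝ᵥ (J n) *ᵥ y = 0) → y = 0 := by
    intro y hy
    have hJy : (J n) *ᵥ y = 0 := by
      funext i
      have := hy (Pi.single i 1)
      simpa using this
    have := congrArg (fun v => (J n) *ᵥ v) hJy
    simpa [Matrix.mulVec_mulVec, spJ_mul_J, Matrix.neg_mulVec, Matrix.one_mulVec,
      neg_eq_zero] using this
  set W2 : ((Fin n ⊕ Fin n) → ℝ) →ₗ[ℝ] ((Fin n ⊕ Fin n) → ℝ) →ₗ[ℝ] ℝ := LinearMap.mk₂ ℝ (fun x y => x ⬝ᵥ (J n) *ᵥ y)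
      (fun x x' y => by rw [add_dotProduct])
      (fun cc x y => by rw [smul_dotProduct])
      (fun x y y' => by rw [Matrix.mulVec_add, dotProduct_add])
      (fun cc x y => by rw [Matrix.mulVec_smul, dotProduct_smul]) with hW2
  set L : Vp →ₗ[ℝ] Module.Dual ℝ Vm :=
    Vm.subtype.dualMap ∘ₗ (W2.flip ∘ₗ Vp.subtype) with hL
  set L' : Vm →ₗ[ℝ] Module.Dual ℝ Vp :=
    Vp.subtype.dualMap ∘ₗ (W2.flip ∘ₗ Vm.subtype) with hL'
  have hLapp : ∀ (g : Vp) (e : Vm), L g e = (e : (Fin n ⊕ Fin n) → ℝ) ⬝ᵥ (J n) *ᵥ (g : (Fin n ⊕ Fin n) → ℝ) := fun g e => rfl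
  have hL'app : ∀ (g : Vm) (e : Vp), L' g e = (e : (Fin n ⊕ Fin n) → ℝ) ⬝ᵥ (J n) *ᵥ (g : (Fin n ⊕ Fin n) → ℝ) := fun g e => rfl
  have hLinj : Function.Injective L := by
    rw [← LinearMap.ker_eq_bot, LinearMap.ker_eq_bot']
    intro f hf
    have hall : ∀ x : (Fin n ⊕ Fin n) → ℝ, x ⬝ᵥ (J n) *ᵥ (f : (Fin n ⊕ Fin n) → ℝ) = 0 := by
      intro x
      obtain ⟨y, hy, z, hz, rfl⟩ := Submodule.mem_sup.mp
        (by rw [hcompl.sup_eq_top]; trivial : x ∈ Vm ⊔ Vp)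
      rw [add_dotProduct]
      have h1 : y ⬝ᵥ (J n) *ᵥ (f : (Fin n ⊕ Fin n) → ℝ) = 0 := by
        have := congrArg (fun φ => φ ⟨y, hy⟩) hf
        simpa [hLapp] using this
      have h2 : z ⬝ᵥ (J n) *ᵥ (f : (Fin n ⊕ Fin n) → ℝ) = 0 := isop z hz (f : (Fin n ⊕ Fin n) → ℝ) f.2
      rw [h1, h2, add_zero]
    exact Subtype.ext (hnd _ hall)
  have hL'inj : Function.Injective L' := by
    rw [← LinearMap.ker_eq_bot, LinearMap.ker_eq_bot']
    intro f hf
    have hall : ∀ x : (Fin n ⊕ Fin n) → ℝ, x ⬝ᵥ (J n) *ᵥ (f : (Fin n ⊕ Fin n) → ℝ) = 0 := by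
      intro x
      obtain ⟨y, hy, z, hz, rfl⟩ := Submodule.mem_sup.mp
        (by rw [hcompl.sup_eq_top]; trivial : x ∈ Vm ⊔ Vp)
      rw [add_dotProduct]
      have h1 : y ⬝ᵥ (J n) *ᵥ (f : (Fin n ⊕ Fin n) → ℝ) = 0 := isom y hy (f : (Fin n ⊕ Fin n) → ℝ) f.2
      have h2 : z ⬝ᵥ (J n) *ᵥ (f : (Fin n ⊕ Fin n) → ℝ) = 0 := by
        have := congrArg (fun φ => φ ⟨z, hz⟩) hf
        simpa [hL'app] using this
      rw [h1, h2, add_zero]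
    exact Subtype.ext (hnd _ hall)
  have hfr : Module.finrank ℝ Vm + Module.finrank ℝ Vp = n + n := by
    rw [Submodule.finrank_add_eq_of_isCompl hcompl]
    simp [Module.finrank_fintype_fun_eq_card]
  have hle1 : Module.finrank ℝ Vp ≤ Module.finrank ℝ Vm := by
    have := LinearMap.finrank_le_finrank_of_injective hLinj
    rwa [Subspace.dual_finrank_eq] at this
  have hle2 : Module.finrank ℝ Vm ≤ Module.finrank ℝ Vp := by
    have := LinearMap.finrank_le_finrank_of_injective hL'inj
    rwa [Subspace.dual_finrank_eq] at this
  have heq : Module.finrank ℝ Vm = Module.finrank ℝ Vp := le_antisymm hle2 hle1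
  have hVmn : Module.finrank ℝ Vm = n := by omega
  set bm : Module.Basis (Fin n) ℝ Vm := Module.finBasisOfFinrankEq ℝ Vm hVmn with hbm
  have hLbij : Function.Bijective L :=
    ⟨hLinj, (LinearMap.injective_iff_surjective_of_finrank_eq_finrank
      (by rw [Subspace.dual_finrank_eq]; omega)).mp hLinj⟩
  set Leq : Vp ≃ₗ[ℝ] Module.Dual ℝ Vm := LinearEquiv.ofBijective L hLbij with hLeq
  set c : (Fin n ⊕ Fin n) → ((Fin n ⊕ Fin n) → ℝ) :=
    Sum.elim (fun j => (bm j : (Fin n ⊕ Fin n) → ℝ)) (fun j => ((Leq.symm (bm.coord j) : Vp) : (Fin n ⊕ Fin n) → ℝ)) with hc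
  have hcm : ∀ j, c (Sum.inl j) ∈ Vm := fun j => (bm j).2
  have hcp : ∀ j, c (Sum.inr j) ∈ Vp := fun j => (Leq.symm (bm.coord j)).2
  have hpair : ∀ i j, (c (Sum.inl i)) ⬝ᵥ (J n) *ᵥ (c (Sum.inr j)) = if i = j then 1 else 0 := by
    intro i j
    have h1 : L (Leq.symm (bm.coord j)) = bm.coord j := Leq.apply_symm_apply _
    have h2 := congrArg (fun φ => φ (bm i)) h1
    simp only [hLapp] at h2
    have e1 : c (Sum.inl i) = (bm i : (Fin n ⊕ Fin n) → ℝ) := rfl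
    have e2 : c (Sum.inr j) = ((Leq.symm (bm.coord j) : Vp) : (Fin n ⊕ Fin n) → ℝ) := rfl
    rw [e1, e2, h2, Module.Basis.coord_apply, Module.Basis.repr_self, Finsupp.single_apply]
  set hm : SpMat n := Matrix.of (fun i k => c k i) with hhm
  refine ⟨hm, ?_, ?_⟩
  · have hentry : ∀ a b, (hmᵀ * (J n) * hm) a b = c a ⬝ᵥ (J n) *ᵥ c b := by
      intro a b
      simp only [Matrix.mul_apply, Matrix.transpose_apply, hhm, Matrix.of_apply,
        dotProduct, Matrix.mulVec, Finset.sum_mul, Finset.mul_sum]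
      rw [Finset.sum_comm]
      refine Finset.sum_congr rfl fun k _ => Finset.sum_congr rfl fun l _ => ?_
      ring
    ext a b
    rw [hentry]
    rcases a with i | i <;> rcases b with j | j
    · rw [isom _ (hcm i) _ (hcm j), hJdef]
      simp
    · rw [hpair i j, hJdef]
      by_cases hij : i = j <;> simp [hij, Matrix.one_apply]
    · rw [hanti, hpair j i, hJdef]
      rcases eq_or_ne i j with hij | hij
      · simp [hij]
      · simp [hij, Ne.symm hij, Matrix.one_apply, Matrix.neg_apply]
    · rw [isop _ (hcp i) _ (hcp j), hJdef]
      simp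
  · ext i k
    have hBc : (B * hm) i k = (B *ᵥ c k) i := by
      simp [Matrix.mul_apply, hhm, Matrix.mulVec, dotProduct]
    rcases k with j | j
    · rw [hBc, (memVm _).1 (hcm j), Pi.neg_apply]
      simp [hhm, Matrix.mul_apply, Fintype.sum_sum_type, Iminus,
        Matrix.fromBlocks_apply₁₁, Matrix.fromBlocks_apply₂₁, Matrix.one_apply,
        Matrix.neg_apply, mul_ite, Finset.sum_ite_eq']
    · rw [hBc, (memVp _).1 (hcp j)]
      simp [hhm, Matrix.mul_apply, Fintype.sum_sum_type, Iminus,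
        Matrix.fromBlocks_apply₁₂, Matrix.fromBlocks_apply₂₂, Matrix.one_apply,
        Matrix.neg_apply, mul_ite, Finset.sum_ite_eq']

/-- H¹(Gal(ℂ/ℝ), Sp(2n,ℝ)) is trivial: every cocycle is a coboundary. -/
theorem galois_cohomology_trivial (n : ℕ) (γ : SpMat n) (hγ : γ ∈ Sp n)
    (hc : γ * tau γ = 1) :
    ∃ h ∈ Sp n, γ = tau h * h⁻¹ := by
  have hγ' : γᵀ * J n * γ = J n := hγ
  have hIm2 := spIminus_mul_Iminus n
  have hB2 : (Iminus n * γ) * (Iminus n * γ) = 1 := by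
    have h1 : γ * (Iminus n * γ * Iminus n) = 1 := hc
    have h2 := congrArg (fun X => Iminus n * X * Iminus n) h1
    simp only [mul_one] at h2
    rw [hIm2] at h2
    calc (Iminus n * γ) * (Iminus n * γ)
        = Iminus n * (γ * (Iminus n * γ * Iminus n)) * Iminus n := by
          simp only [Matrix.mul_assoc, hIm2, Matrix.mul_one]
      _ = 1 := h2
  have hBJ : (Iminus n * γ)ᵀ * J n * (Iminus n * γ) = -(J n) := by
    have e1 : γᵀ * (Iminus n * J n * Iminus n) * γ = -(J n) := by
      rw [spIminus_J_Iminus, Matrix.mul_neg, Matrix.neg_mul, hγ']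
    calc (Iminus n * γ)ᵀ * J n * (Iminus n * γ)
        = γᵀ * (Iminus n * J n * Iminus n) * γ := by
          rw [Matrix.transpose_mul, spIminus_transpose]
          simp only [Matrix.mul_assoc]
      _ = -(J n) := e1
  obtain ⟨h, hs, hcomm⟩ := sp_key n (Iminus n * γ) hB2 hBJ
  -- h is invertible
  have hdetJ : (J n).det * (J n).det = 1 := by
    have := congrArg Matrix.det (spJ_mul_J n)
    rwa [Matrix.det_mul, Matrix.det_neg, Matrix.det_one, mul_one,
      Fintype.card_sum, Fintype.card_fin, Even.neg_one_pow ⟨n, rfl⟩] at this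
  have hdetJ' : (J n).det ≠ 0 := by
    intro h0; rw [h0, zero_mul] at hdetJ; exact zero_ne_one hdetJ
  have hdeth : IsUnit h.det := by
    have := congrArg Matrix.det hs
    rw [Matrix.det_mul, Matrix.det_mul, Matrix.det_transpose] at this
    have h1 : h.det * h.det = 1 := by
      have h2 : (h.det * h.det) * (J n).det = 1 * (J n).det := by
        linear_combination this
      exact mul_right_cancel₀ hdetJ' h2
    exact IsUnit.of_mul_eq_one _ h1
  have hinv : h * h⁻¹ = 1 := Matrix.mul_nonsing_inv h hdeth
  refine ⟨h, hs, ?_⟩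
  have e1 : h * Iminus n * h⁻¹ = Iminus n * γ := by
    rw [← hcomm, Matrix.mul_assoc, hinv, Matrix.mul_one]
  calc γ = Iminus n * Iminus n * γ := by rw [hIm2, Matrix.one_mul]
    _ = Iminus n * (h * Iminus n * h⁻¹) := by rw [e1, Matrix.mul_assoc]
    _ = tau h * h⁻¹ := by simp only [tau, Matrix.mul_assoc]
end
end

section
/- Let γ ∈ Sp(2n,ℝ) with γ·τ(γ) = I. Then γ = τ(h)h⁻¹ for some h ∈ Sp(2n,ℝ) if and only if there exists Z in the Siegel upper half space with γ·Z = -conj(Z). -/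
noncomputable section
open Matrix Complex

/-!
If `γ = τ(h) h⁻¹`, the point `Z = h · iI` works, because `τ(g) · (-Z̄) = -(g · Z)‾` and
`-(iI)‾ = iI`.

Conversely, write `Z = h₀ · iI`; the twisted conjugate `k = τ(h₀)⁻¹ γ h₀` then fixes `iI` and still
satisfies `k τ(k) = 1`. The stabiliser of `iI` is `U(n)`, embedded by `X + iY ↦ [[X, Y], [-Y, X]]`,
and on it `τ` is complex conjugation; so `k` comes from a unitary `U` with `U Ū = 1`. Hilbert 90
for `U(n)` writes `U = W̄ W⁻¹` with `W` unitary, and then `γ = τ(h₀ W) (h₀ W)⁻¹`.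

For Hilbert 90, a suitable `V = α + ᾱ Ū` is invertible and satisfies `V̄ = U V`. As `U` is
symmetric, `V* V` is real, say `Sᵀ S`, and `W = V S⁻¹` is unitary with `W̄ = U W`.
-/

open scoped ComplexOrder

open scoped MatrixOrder in
theorem Matrix.PosDef.exists_isUnit_conjTranspose_mul_self {𝕜 m : Type*} [RCLike 𝕜] [Fintype m]
    [DecidableEq m] {Y : Matrix m m 𝕜} (hY : Y.PosDef) :
    ∃ S : Matrix m m 𝕜, IsUnit S ∧ Sᴴ * S = Y := by
  refine ⟨CFC.sqrt Y, hY.isStrictlyPositive.isUnit_cfcSqrt, ?_⟩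
  rw [← star_eq_conjTranspose, (CFC.sqrt_nonneg Y).isSelfAdjoint.star_eq]
  exact CFC.sqrt_mul_sqrt_self Y hY.posSemidef.nonneg

theorem Matrix.conjTranspose_map_ofReal {m m' : Type*} (A : Matrix m m' ℝ) :
    (A.map ofRealHom)ᴴ = Aᵀ.map ofRealHom := by
  ext i j; simp

theorem Matrix.PosDef.map_ofReal {m : Type*} [Fintype m] [DecidableEq m] {Y : Matrix m m ℝ}
    (hY : Y.PosDef) : (Y.map ofRealHom).PosDef := by
  obtain ⟨S, hS, rfl⟩ := hY.exists_isUnit_conjTranspose_mul_self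
  rw [Matrix.map_mul, conjTranspose_eq_transpose_of_trivial, ← conjTranspose_map_ofReal]
  exact .conjTranspose_mul_self _ (mulVec_injective_of_isUnit (hS.map ofRealHom.mapMatrix))

theorem Matrix.PosDef.of_map_ofReal {m : Type*} [Fintype m] {Y : Matrix m m ℝ}
    (hY : (Y.map ofRealHom).PosDef) : Y.PosDef := by
  refine .of_dotProduct_mulVec_pos ?_ fun x hx => ?_
  · ext i j
    simpa using congr_arg re (congr_fun₂ hY.isHermitian i j)
  · have hx' : ofRealHom ∘ x ≠ 0 := fun h => hx (funext fun i => by simpa using congr_fun h i)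
    have hcast : star (ofRealHom ∘ x) ⬝ᵥ Y.map ofRealHom *ᵥ (ofRealHom ∘ x) =
        ofRealHom (x ⬝ᵥ Y *ᵥ x) := by
      rw [RingHom.map_dotProduct]
      congr 1
      · ext i; simp
      · ext i; rw [Function.comp_apply, RingHom.map_mulVec]
    have := hY.dotProduct_mulVec_pos hx'
    rw [hcast, ofRealHom_eq_coe, zero_lt_real] at this
    rwa [star_trivial]

theorem Matrix.dotProduct_conjTranspose_mul_mulVec {m α : Type*} [Fintype m] [CommSemiring α]
    [StarRing α] (A B : Matrix m m α) (v : m → α) :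
    star v ⬝ᵥ (Aᴴ * B) *ᵥ v = star (A *ᵥ v) ⬝ᵥ B *ᵥ v := by
  rw [← mulVec_mulVec, dotProduct_mulVec, ← star_mulVec]

open Polynomial in
theorem Matrix.exists_real_det_smul_add_ne_zero {m : Type*} [Fintype m] [DecidableEq m]
    (A B : Matrix m m ℂ) {w : ℂ} (hw : (w • A + B).det ≠ 0) :
    ∃ t : ℝ, ((t : ℂ) • A + B).det ≠ 0 := by
  let p : ℂ[X] := ((X : ℂ[X]) • A.map C + B.map C).det
  have hp (z : ℂ) : p.eval z = (z • A + B).det := by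
    rw [← coe_evalRingHom, RingHom.map_det]
    congr 1
    ext i j
    simp only [RingHom.mapMatrix_apply, map_apply, add_apply, smul_apply, smul_eq_mul,
      coe_evalRingHom, eval_add, eval_mul, eval_X, eval_C]
  by_contra! h
  have hp0 : p = 0 := p.eq_zero_of_infinite_isRoot <|
    Set.infinite_of_injective_forall_mem ofReal_injective fun t => (hp t).trans (h t)
  exact hw (by rw [← hp, hp0, eval_zero])

theorem SymplecticGroup.inv_mem {m R : Type*} [Fintype m] [DecidableEq m] [CommRing R]
    {g : Matrix (m ⊕ m) (m ⊕ m) R} (hg : g ∈ symplecticGroup m R) :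
    g⁻¹ ∈ symplecticGroup m R :=
  SymplecticGroup.coe_inv' ⟨g, hg⟩ ▸ (⟨g, hg⟩⁻¹ : symplecticGroup m R).2

theorem SymplecticGroup.mem_iff_toBlocks {m R : Type*} [Fintype m] [DecidableEq m]
    [CommRing R] {g : Matrix (m ⊕ m) (m ⊕ m) R} :
    g ∈ symplecticGroup m R ↔
      g.toBlocks₁₁ᵀ * g.toBlocks₂₁ = g.toBlocks₂₁ᵀ * g.toBlocks₁₁ ∧
      g.toBlocks₁₂ᵀ * g.toBlocks₂₂ = g.toBlocks₂₂ᵀ * g.toBlocks₁₂ ∧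
      g.toBlocks₁₁ᵀ * g.toBlocks₂₂ - g.toBlocks₂₁ᵀ * g.toBlocks₁₂ = 1 := by
  conv_lhs => rw [← fromBlocks_toBlocks g]
  exact SymplecticGroup.fromBlocks_mem_iff

section Mobius

variable {m R : Type*} [Fintype m] [DecidableEq m] [CommRing R]

def mobiusNum (M : Matrix (m ⊕ m) (m ⊕ m) R) (Z : Matrix m m R) : Matrix m m R :=
  M.toBlocks₁₁ * Z + M.toBlocks₁₂

def mobiusDen (M : Matrix (m ⊕ m) (m ⊕ m) R) (Z : Matrix m m R) : Matrix m m R :=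
  M.toBlocks₂₁ * Z + M.toBlocks₂₂

def mobius (M : Matrix (m ⊕ m) (m ⊕ m) R) (Z : Matrix m m R) : Matrix m m R :=
  mobiusNum M Z * (mobiusDen M Z)⁻¹

theorem mobius_one (Z : Matrix m m R) : mobius 1 Z = Z := by
  simp [mobius, mobiusNum, mobiusDen, ← fromBlocks_one]

theorem mobiusNum_mul (M N : Matrix (m ⊕ m) (m ⊕ m) R) (Z : Matrix m m R) :
    mobiusNum (M * N) Z = M.toBlocks₁₁ * mobiusNum N Z + M.toBlocks₁₂ * mobiusDen N Z := by
  conv_lhs => rw [← fromBlocks_toBlocks M, ← fromBlocks_toBlocks N]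
  simp only [mobiusNum, mobiusDen, fromBlocks_multiply, toBlocks_fromBlocks₁₁,
    toBlocks_fromBlocks₁₂]
  noncomm_ring

theorem mobiusDen_mul (M N : Matrix (m ⊕ m) (m ⊕ m) R) (Z : Matrix m m R) :
    mobiusDen (M * N) Z = M.toBlocks₂₁ * mobiusNum N Z + M.toBlocks₂₂ * mobiusDen N Z := by
  conv_lhs => rw [← fromBlocks_toBlocks M, ← fromBlocks_toBlocks N]
  simp only [mobiusNum, mobiusDen, fromBlocks_multiply, toBlocks_fromBlocks₂₁,
    toBlocks_fromBlocks₂₂]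
  noncomm_ring

theorem mobius_mul (M N : Matrix (m ⊕ m) (m ⊕ m) R) {Z : Matrix m m R}
    (hN : IsUnit (mobiusDen N Z).det) : mobius (M * N) Z = mobius M (mobius N Z) := by
  set D := mobiusDen N Z
  have clear_den (P Q : Matrix m m R) : (P * D⁻¹ + Q) * D = P + Q * D := by
    rw [Matrix.add_mul, nonsing_inv_mul_cancel_right _ _ hN]
  have hnum : mobiusNum M (mobius N Z) * D = mobiusNum (M * N) Z := by
    rw [mobiusNum_mul, mobiusNum, mobius, ← Matrix.mul_assoc, clear_den]
  have hden : mobiusDen M (mobius N Z) * D = mobiusDen (M * N) Z := by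
    rw [mobiusDen_mul, mobiusDen, mobius, ← Matrix.mul_assoc, clear_den]
  rw [mobius, ← hnum, ← hden, Matrix.mul_inv_rev, Matrix.mul_assoc,
    mul_nonsing_inv_cancel_left _ _ hN]
  rfl

/-- `M` preserves the symplectic pairing of the column blocks `[Z; 1]` and `[Z'; 1]`. -/
theorem transpose_mobiusDen_mul_mobiusNum_sub {M : Matrix (m ⊕ m) (m ⊕ m) R}
    (hM : M ∈ symplecticGroup m R) (Z : Matrix m m R) {Z' : Matrix m m R} (hZ' : Z'ᵀ = Z') :
    (mobiusDen M Z')ᵀ * mobiusNum M Z - (mobiusNum M Z')ᵀ * mobiusDen M Z = Z - Z' := by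
  obtain ⟨h₁, h₂, h₃⟩ := SymplecticGroup.mem_iff_toBlocks.mp hM
  have h₄ := congr_arg transpose h₃
  simp only [transpose_sub, transpose_mul, transpose_transpose, transpose_one] at h₄
  set A := M.toBlocks₁₁; set B := M.toBlocks₁₂; set C := M.toBlocks₂₁; set D := M.toBlocks₂₂
  have hA : Aᵀ * D = 1 + Cᵀ * B := by rw [← h₃]; abel
  have hD : Dᵀ * A = 1 + Bᵀ * C := by rw [← h₄]; abel
  simp only [mobiusNum, mobiusDen, transpose_add, transpose_mul, hZ']
  calc (Z' * Cᵀ + Dᵀ) * (A * Z + B) - (Z' * Aᵀ + Bᵀ) * (C * Z + D)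
      = Z' * (Cᵀ * A - Aᵀ * C) * Z + Z' * (Cᵀ * B - Aᵀ * D) + (Dᵀ * A - Bᵀ * C) * Z
          + (Dᵀ * B - Bᵀ * D) := by noncomm_ring
    _ = Z - Z' := by rw [h₁, h₂, hA, hD]; noncomm_ring

theorem mobius_transpose {M : Matrix (m ⊕ m) (m ⊕ m) R} (hM : M ∈ symplecticGroup m R)
    {Z : Matrix m m R} (hZ : Zᵀ = Z) (hD : IsUnit (mobiusDen M Z).det) :
    (mobius M Z)ᵀ = mobius M Z := by
  have h := transpose_mobiusDen_mul_mobiusNum_sub hM Z hZ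
  rw [sub_self, sub_eq_zero] at h
  have hDt : IsUnit (mobiusDen M Z)ᵀ.det := by rwa [det_transpose]
  rw [mobius, transpose_mul, transpose_nonsing_inv]
  calc ((mobiusDen M Z)ᵀ)⁻¹ * (mobiusNum M Z)ᵀ
      = ((mobiusDen M Z)ᵀ)⁻¹ * ((mobiusNum M Z)ᵀ * mobiusDen M Z) * (mobiusDen M Z)⁻¹ := by
        rw [Matrix.mul_assoc, mul_nonsing_inv_cancel_right _ _ hD]
    _ = mobiusNum M Z * (mobiusDen M Z)⁻¹ := by
        rw [← h, ← Matrix.mul_assoc, nonsing_inv_mul _ hDt, Matrix.one_mul]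

end Mobius

section

variable {n : ℕ}

theorem mem_Sp_iff {g : SpMat n} : g ∈ Sp n ↔ g ∈ symplecticGroup (Fin n) ℝ := by
  have hJ : _root_.J n = -Matrix.J (Fin n) ℝ := by
    simp [_root_.J, Matrix.J, fromBlocks_neg]
  rw [SymplecticGroup.mem_iff', Sp, Set.mem_ofPred_eq, hJ, Matrix.mul_neg, Matrix.neg_mul,
    neg_inj]

theorem Iminus_mul_self : Iminus n * Iminus n = 1 := by
  simp [Iminus, fromBlocks_multiply, ← fromBlocks_one]

theorem tau_eq_fromBlocks (g : SpMat n) :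
    tau g = fromBlocks g.toBlocks₁₁ (-g.toBlocks₁₂) (-g.toBlocks₂₁) g.toBlocks₂₂ := by
  conv_lhs => rw [tau, ← fromBlocks_toBlocks g]
  simp [Iminus, fromBlocks_multiply]

theorem tau_mul (g h : SpMat n) : tau (g * h) = tau g * tau h := by
  simp only [tau]
  calc Iminus n * (g * h) * Iminus n = Iminus n * g * (Iminus n * Iminus n) * h * Iminus n := by
        rw [Iminus_mul_self]; noncomm_ring
    _ = Iminus n * g * Iminus n * (Iminus n * h * Iminus n) := by noncomm_ring

theorem tau_inv (g : SpMat n) : tau g⁻¹ = (tau g)⁻¹ := by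
  have hI : (Iminus n)⁻¹ = Iminus n := inv_eq_left_inv Iminus_mul_self
  simp only [tau, Matrix.mul_inv_rev, hI, Matrix.mul_assoc]

theorem tau_tau (g : SpMat n) : tau (tau g) = g := by
  simp only [tau, ← Matrix.mul_assoc, Iminus_mul_self, Matrix.one_mul]
  rw [Matrix.mul_assoc, Iminus_mul_self, Matrix.mul_one]

theorem tau_mem {g : SpMat n} (hg : g ∈ symplecticGroup (Fin n) ℝ) :
    tau g ∈ symplecticGroup (Fin n) ℝ := by
  rw [tau_eq_fromBlocks, SymplecticGroup.fromBlocks_mem_iff]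
  obtain ⟨h₁, h₂, h₃⟩ := SymplecticGroup.mem_iff_toBlocks.mp hg
  simp only [transpose_neg, Matrix.mul_neg, Matrix.neg_mul, neg_neg, h₁, h₂, h₃, and_self]

theorem conjM_mul (A B : Matrix (Fin n) (Fin n) ℂ) : conjM (A * B) = conjM A * conjM B :=
  Matrix.map_mul

theorem conjM_add (A B : Matrix (Fin n) (Fin n) ℂ) : conjM (A + B) = conjM A + conjM B := by
  ext; simp [conjM]

theorem conjM_sub (A B : Matrix (Fin n) (Fin n) ℂ) : conjM (A - B) = conjM A - conjM B := by
  ext; simp [conjM]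

theorem conjM_smul (c : ℂ) (A : Matrix (Fin n) (Fin n) ℂ) :
    conjM (c • A) = starRingEnd ℂ c • conjM A := by
  ext; simp [conjM]

theorem conjM_one : conjM (1 : Matrix (Fin n) (Fin n) ℂ) = 1 :=
  Matrix.map_one _ (map_zero _) (map_one _)

theorem conjM_conjM (A : Matrix (Fin n) (Fin n) ℂ) : conjM (conjM A) = A := by
  ext; simp [conjM]

theorem conjM_map_ofReal (A : Matrix (Fin n) (Fin n) ℝ) :
    conjM (A.map ofRealHom) = A.map ofRealHom := by
  ext; simp [conjM]

theorem conjM_transpose (A : Matrix (Fin n) (Fin n) ℂ) : conjM Aᵀ = (conjM A)ᵀ :=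
  transpose_map

theorem transpose_conjM (A : Matrix (Fin n) (Fin n) ℂ) : (conjM A)ᵀ = Aᴴ := rfl

theorem conjM_conjTranspose (A : Matrix (Fin n) (Fin n) ℂ) : conjM Aᴴ = Aᵀ := by
  ext; simp [conjM]

theorem conjM_inv (A : Matrix (Fin n) (Fin n) ℂ) : conjM A⁻¹ = (conjM A)⁻¹ := by
  rw [← transpose_transpose (conjM A⁻¹), transpose_conjM, conjTranspose_nonsing_inv,
    ← transpose_conjM, ← transpose_nonsing_inv, transpose_transpose]

theorem sub_conjM (Z : Matrix (Fin n) (Fin n) ℂ) :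
    Z - conjM Z = (2 * I) • (Z.map im).map ofRealHom := by
  ext i j
  simp [conjM, sub_conj]
  ring

theorem map_re_map_ofReal_of_conjM_eq {P : Matrix (Fin n) (Fin n) ℂ} (hP : conjM P = P) :
    (P.map re).map ofRealHom = P := by
  ext i j
  simpa [conjM, conj_eq_iff_re] using congr_fun₂ hP i j

theorem map_ofReal_re_add_I_smul_im (Z : Matrix (Fin n) (Fin n) ℂ) :
    (Z.map re).map ofRealHom + I • (Z.map im).map ofRealHom = Z := by
  ext i j
  simp [mul_comm I, re_add_im]

theorem mem_Siegel_iff {Z : Matrix (Fin n) (Fin n) ℂ} :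
    Z ∈ Siegel n ↔ Zᵀ = Z ∧ (Z.map im).PosDef := Iff.rfl

theorem act_eq_mobius (g : SpMat n) (Z : Matrix (Fin n) (Fin n) ℂ) :
    act g Z = mobius (g.map ofRealHom) Z := rfl

theorem conjM_mobiusNum (g : SpMat n) (Z : Matrix (Fin n) (Fin n) ℂ) :
    conjM (mobiusNum (g.map ofRealHom) Z) = mobiusNum (g.map ofRealHom) (conjM Z) := by
  ext i j
  simp [conjM, mobiusNum, mul_apply, toBlocks₁₁, toBlocks₁₂]

theorem conjM_mobiusDen (g : SpMat n) (Z : Matrix (Fin n) (Fin n) ℂ) :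
    conjM (mobiusDen (g.map ofRealHom) Z) = mobiusDen (g.map ofRealHom) (conjM Z) := by
  ext i j
  simp [conjM, mobiusDen, mul_apply, toBlocks₂₁, toBlocks₂₂]

theorem conjTranspose_mobiusDen_mul_mobiusNum_sub {g : SpMat n}
    (hg : g ∈ symplecticGroup (Fin n) ℝ) {Z : Matrix (Fin n) (Fin n) ℂ} (hZ : Zᵀ = Z) :
    (mobiusDen (g.map ofRealHom) Z)ᴴ * mobiusNum (g.map ofRealHom) Z -
      (mobiusNum (g.map ofRealHom) Z)ᴴ * mobiusDen (g.map ofRealHom) Z =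
      (2 * I) • (Z.map im).map ofRealHom := by
  have hZc : (conjM Z)ᵀ = conjM Z := by rw [← conjM_transpose, hZ]
  rw [← sub_conjM, ← transpose_mobiusDen_mul_mobiusNum_sub (SymplecticGroup.map_mem hg ofRealHom)
    Z hZc, ← conjM_mobiusNum, ← conjM_mobiusDen, transpose_conjM, transpose_conjM]

theorem isUnit_det_mobiusDen {g : SpMat n} (hg : g ∈ symplecticGroup (Fin n) ℝ)
    {Z : Matrix (Fin n) (Fin n) ℂ} (hZ : Z ∈ Siegel n) :
    IsUnit (mobiusDen (g.map ofRealHom) Z).det := by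
  rw [isUnit_iff_ne_zero, Ne, ← exists_mulVec_eq_zero_iff]
  -- a kernel vector `v` of the denominator would give `v* (Im Z) v = 0`
  rintro ⟨v, hv, hDv⟩
  have hpos := (hZ.2.map_ofReal).dotProduct_mulVec_pos hv
  have key := congr_arg (fun P => star v ⬝ᵥ P *ᵥ v)
    (conjTranspose_mobiusDen_mul_mobiusNum_sub hg hZ.1)
  simp only [sub_mulVec, dotProduct_sub, dotProduct_conjTranspose_mul_mulVec, hDv, star_zero,
    zero_dotProduct, dotProduct_zero, sub_zero, smul_mulVec, dotProduct_smul, smul_eq_mul] at key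
  exact mul_ne_zero (by simp) hpos.ne' key.symm

theorem act_mem_Siegel {g : SpMat n} (hg : g ∈ symplecticGroup (Fin n) ℝ)
    {Z : Matrix (Fin n) (Fin n) ℂ} (hZ : Z ∈ Siegel n) : act g Z ∈ Siegel n := by
  set N := mobiusNum (g.map ofRealHom) Z
  set D := mobiusDen (g.map ofRealHom) Z
  have hD : IsUnit D.det := isUnit_det_mobiusDen hg hZ
  have hsymm : (act g Z)ᵀ = act g Z :=
    mobius_transpose (SymplecticGroup.map_mem hg ofRealHom) hZ.1 hD
  have hconj : conjM (act g Z) = (act g Z)ᴴ := by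
    rw [← transpose_conjM, ← conjM_transpose, hsymm]
  have hDD : D * D⁻¹ = 1 := mul_nonsing_inv D hD
  have him : ((act g Z).map im).map ofRealHom = (D⁻¹)ᴴ * (Z.map im).map ofRealHom * D⁻¹ := by
    refine smul_right_injective _ (by simp : (2 * I) ≠ 0) ?_
    dsimp only
    rw [← sub_conjM, hconj]
    calc act g Z - (act g Z)ᴴ = (D * D⁻¹)ᴴ * N * D⁻¹ - (D⁻¹)ᴴ * Nᴴ * (D * D⁻¹) := by
          rw [hDD, conjTranspose_one, Matrix.one_mul, Matrix.mul_one, act_eq_mobius, mobius,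
            conjTranspose_mul]
      _ = (D⁻¹)ᴴ * (Dᴴ * N - Nᴴ * D) * D⁻¹ := by
          rw [conjTranspose_mul]; noncomm_ring
      _ = (2 * I) • ((D⁻¹)ᴴ * (Z.map im).map ofRealHom * D⁻¹) := by
          rw [conjTranspose_mobiusDen_mul_mobiusNum_sub hg hZ.1, Matrix.mul_smul, Matrix.smul_mul]
  refine mem_Siegel_iff.mpr ⟨hsymm, .of_map_ofReal ?_⟩
  rw [him]
  exact (hZ.2.map_ofReal).conjTranspose_mul_mul_same <| mulVec_injective_of_isUnit <|
    (isUnit_nonsing_inv_iff).mpr ((isUnit_iff_isUnit_det D).mpr hD)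

theorem act_one (Z : Matrix (Fin n) (Fin n) ℂ) : act 1 Z = Z := by
  rw [act_eq_mobius, ← RingHom.mapMatrix_apply, map_one, mobius_one]

theorem act_mul (g : SpMat n) {h : SpMat n} (hh : h ∈ symplecticGroup (Fin n) ℝ)
    {Z : Matrix (Fin n) (Fin n) ℂ} (hZ : Z ∈ Siegel n) : act (g * h) Z = act g (act h Z) := by
  rw [act_eq_mobius, ← RingHom.mapMatrix_apply, map_mul]
  exact mobius_mul _ _ (isUnit_det_mobiusDen hh hZ)

theorem act_tau_neg_conjM (g : SpMat n) (Z : Matrix (Fin n) (Fin n) ℂ) :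
    act (tau g) (-conjM Z) = -conjM (act g Z) := by
  have hnum : mobiusNum ((tau g).map ofRealHom) (-conjM Z) =
      -conjM (mobiusNum (g.map ofRealHom) Z) := by
    ext i j
    simp [conjM, tau_eq_fromBlocks, mobiusNum, mul_apply, toBlocks₁₁, toBlocks₁₂, add_comm]
  have hden : mobiusDen ((tau g).map ofRealHom) (-conjM Z) =
      conjM (mobiusDen (g.map ofRealHom) Z) := by
    ext i j
    simp [conjM, tau_eq_fromBlocks, mobiusDen, mul_apply, toBlocks₂₁, toBlocks₂₂]
  rw [act_eq_mobius, act_eq_mobius, mobius, mobius, hnum, hden, conjM_mul, conjM_inv,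
    Matrix.neg_mul]

def iId (n : ℕ) : Matrix (Fin n) (Fin n) ℂ := I • 1

theorem iId_mem_Siegel : iId n ∈ Siegel n := by
  refine ⟨by simp [iId], ?_⟩
  convert PosDef.one (n := Fin n) (R := ℝ)
  ext i j
  by_cases h : i = j <;> simp [iId, one_apply, h]

theorem neg_conjM_iId : -conjM (iId n) = iId n := by
  rw [iId, conjM_smul, conjM_one, conj_I, neg_smul, neg_neg]

theorem exists_act_iId_eq {Z : Matrix (Fin n) (Fin n) ℂ} (hZ : Z ∈ Siegel n) :
    ∃ h ∈ symplecticGroup (Fin n) ℝ, act h (iId n) = Z := by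
  obtain ⟨hZs, hY⟩ := mem_Siegel_iff.mp hZ
  obtain ⟨S, hS, hSS⟩ := hY.exists_isUnit_conjTranspose_mul_self
  rw [conjTranspose_eq_transpose_of_trivial] at hSS
  have hSdet : IsUnit S.det := (isUnit_iff_isUnit_det S).mp hS
  set X := Z.map re
  have hX : Xᵀ = X := by rw [← transpose_map, hZs]
  refine ⟨fromBlocks Sᵀ (X * S⁻¹) 0 S⁻¹, ?_, ?_⟩
  · rw [SymplecticGroup.fromBlocks_mem_iff]
    refine ⟨by simp, ?_, by simp [mul_nonsing_inv _ hSdet]⟩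
    rw [transpose_mul, hX, Matrix.mul_assoc]
  · have hSc : S.map ofRealHom * S⁻¹.map ofRealHom = 1 := by
      rw [← Matrix.map_mul, mul_nonsing_inv _ hSdet, Matrix.map_one _ (map_zero _) (map_one _)]
    rw [act_eq_mobius, mobius, mobiusNum, mobiusDen, fromBlocks_map]
    simp only [toBlocks_fromBlocks₁₁, toBlocks_fromBlocks₁₂, toBlocks_fromBlocks₂₁,
      toBlocks_fromBlocks₂₂, Matrix.map_zero _ (map_zero _), Matrix.zero_mul, zero_add]
    rw [inv_eq_left_inv hSc, iId, Matrix.mul_smul, Matrix.mul_one, Matrix.add_mul, smul_mul,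
      ← Matrix.map_mul, hSS, Matrix.map_mul, Matrix.mul_assoc, mul_eq_one_comm.mp hSc,
      Matrix.mul_one, add_comm]
    exact map_ofReal_re_add_I_smul_im Z

/-- `X + iY ↦ [[X, Y], [-Y, X]]`; it maps `U(n)` onto the stabiliser of `iI` in `Sp(2n, ℝ)`. -/
def realBlocks (W : Matrix (Fin n) (Fin n) ℂ) : SpMat n :=
  fromBlocks (W.map re) (W.map im) (-W.map im) (W.map re)

theorem map_re_mul (W W' : Matrix (Fin n) (Fin n) ℂ) :
    (W * W').map re = W.map re * W'.map re - W.map im * W'.map im := by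
  ext i j
  simp [mul_apply, Finset.sum_sub_distrib]

theorem map_im_mul (W W' : Matrix (Fin n) (Fin n) ℂ) :
    (W * W').map im = W.map re * W'.map im + W.map im * W'.map re := by
  ext i j
  simp [mul_apply, Finset.sum_add_distrib]

theorem realBlocks_one : realBlocks (1 : Matrix (Fin n) (Fin n) ℂ) = 1 := by
  have him : (1 : Matrix (Fin n) (Fin n) ℂ).map im = 0 := by
    ext i j
    by_cases h : i = j <;> simp [one_apply, h]
  rw [realBlocks, Matrix.map_one _ zero_re one_re, him, neg_zero, fromBlocks_one]

theorem realBlocks_mul (W W' : Matrix (Fin n) (Fin n) ℂ) :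
    realBlocks (W * W') = realBlocks W * realBlocks W' := by
  rw [realBlocks, realBlocks, realBlocks, fromBlocks_multiply, map_re_mul, map_im_mul]
  congr 1 <;> noncomm_ring

theorem realBlocks_injective : Function.Injective (realBlocks (n := n)) := by
  intro W W' h
  obtain ⟨hre, him, -, -⟩ := fromBlocks_inj.mp h
  ext i j
  exact Complex.ext (congr_fun₂ hre i j) (congr_fun₂ him i j)

theorem realBlocks_conjTranspose (W : Matrix (Fin n) (Fin n) ℂ) :
    realBlocks Wᴴ = (realBlocks W)ᵀ := by
  ext (i | i) (j | j) <;> simp [realBlocks]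

theorem tau_realBlocks (W : Matrix (Fin n) (Fin n) ℂ) :
    tau (realBlocks W) = realBlocks (conjM W) := by
  ext (i | i) (j | j) <;> simp [realBlocks, tau_eq_fromBlocks, conjM]

theorem realBlocks_mem_symplecticGroup_iff {W : Matrix (Fin n) (Fin n) ℂ} :
    realBlocks W ∈ symplecticGroup (Fin n) ℝ ↔ Wᴴ * W = 1 := by
  have hJ : Matrix.J (Fin n) ℝ = realBlocks ((-I) • 1) := by
    ext (i | i) (j | j) <;> by_cases h : i = j <;> simp [Matrix.J, realBlocks, one_apply, h]
  rw [SymplecticGroup.mem_iff', hJ, ← realBlocks_conjTranspose, ← realBlocks_mul,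
    ← realBlocks_mul, realBlocks_injective.eq_iff, Matrix.mul_smul, Matrix.mul_one,
    Matrix.smul_mul, smul_right_inj (neg_ne_zero.mpr I_ne_zero)]

theorem exists_realBlocks_eq_of_act_iId {k : SpMat n} (hk : k ∈ symplecticGroup (Fin n) ℝ)
    (hfix : act k (iId n) = iId n) : ∃ U, realBlocks U = k := by
  have hD := isUnit_det_mobiusDen hk iId_mem_Siegel
  have hnum : mobiusNum (k.map ofRealHom) (iId n) =
      iId n * mobiusDen (k.map ofRealHom) (iId n) := by
    calc _ = act k (iId n) * mobiusDen (k.map ofRealHom) (iId n) :=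
          (nonsing_inv_mul_cancel_right _ _ hD).symm
      _ = _ := by rw [hfix]
  have hre : k.toBlocks₂₁ = -k.toBlocks₁₂ := by
    ext i j
    simpa [iId, mobiusNum, mobiusDen, toBlocks₁₁, toBlocks₁₂, toBlocks₂₁, toBlocks₂₂,
      neg_eq_iff_eq_neg, eq_comm] using congr_arg re (congr_fun₂ hnum i j)
  have him : k.toBlocks₂₂ = k.toBlocks₁₁ := by
    ext i j
    simpa [iId, mobiusNum, mobiusDen, toBlocks₁₁, toBlocks₁₂, toBlocks₂₁, toBlocks₂₂, eq_comm]
      using congr_arg im (congr_fun₂ hnum i j)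
  refine ⟨k.toBlocks₁₁.map ofRealHom + I • k.toBlocks₁₂.map ofRealHom, ?_⟩
  conv_rhs => rw [← fromBlocks_toBlocks k, hre, him]
  ext (i | i) (j | j) <;> simp [realBlocks]

theorem exists_isUnit_det_conjM_eq_mul {U : Matrix (Fin n) (Fin n) ℂ}
    (hU : U * conjM U = 1) : ∃ V : Matrix (Fin n) (Fin n) ℂ, IsUnit V.det ∧ conjM V = U * V := by
  -- `V = t • A + B` satisfies `V̄ = U V` for every real `t`, and equals `2` at `t = i`
  set A := I • (conjM U - 1)
  set B := 1 + conjM U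
  have hAB : I • A + B = (2 : ℂ) • 1 := by
    simp only [A, B, smul_smul, I_mul_I]
    module
  obtain ⟨t, ht⟩ := exists_real_det_smul_add_ne_zero A B (w := I) (by
    rw [hAB, det_smul, det_one, mul_one]
    exact pow_ne_zero _ two_ne_zero)
  refine ⟨(t : ℂ) • A + B, isUnit_iff_ne_zero.mpr ht, ?_⟩
  simp only [A, B, conjM_add, conjM_smul, conjM_sub, conjM_one, conjM_conjM, conj_ofReal, conj_I,
    Matrix.mul_add, Matrix.mul_smul, Matrix.mul_sub, Matrix.mul_one, hU]
  module

theorem exists_unitary_mul_map_ofReal {V : Matrix (Fin n) (Fin n) ℂ} (hV : IsUnit V.det)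
    (hP : conjM (Vᴴ * V) = Vᴴ * V) :
    ∃ T : Matrix (Fin n) (Fin n) ℝ, (V * T.map ofRealHom)ᴴ * (V * T.map ofRealHom) = 1 := by
  set R := (Vᴴ * V).map re
  have hR : R.map ofRealHom = Vᴴ * V := map_re_map_ofReal_of_conjM_eq hP
  have hRpos : R.PosDef := .of_map_ofReal <| hR ▸ .conjTranspose_mul_self V
    (mulVec_injective_of_isUnit ((isUnit_iff_isUnit_det V).mpr hV))
  obtain ⟨S, hS, hSS⟩ := hRpos.exists_isUnit_conjTranspose_mul_self
  rw [conjTranspose_eq_transpose_of_trivial] at hSS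
  have hSdet : IsUnit S.det := (isUnit_iff_isUnit_det S).mp hS
  have hT : (S⁻¹)ᵀ * R * S⁻¹ = 1 := by
    rw [← hSS, ← Matrix.mul_assoc, ← transpose_mul, mul_nonsing_inv _ hSdet, transpose_one,
      Matrix.one_mul, mul_nonsing_inv _ hSdet]
  refine ⟨S⁻¹, ?_⟩
  calc (V * S⁻¹.map ofRealHom)ᴴ * (V * S⁻¹.map ofRealHom)
      = (S⁻¹)ᵀ.map ofRealHom * (Vᴴ * V) * S⁻¹.map ofRealHom := by
        rw [conjTranspose_mul, conjTranspose_map_ofReal]; noncomm_ring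
    _ = ((S⁻¹)ᵀ * R * S⁻¹).map ofRealHom := by rw [← hR, Matrix.map_mul, Matrix.map_mul]
    _ = 1 := by rw [hT, Matrix.map_one _ (map_zero _) (map_one _)]

/-- Hilbert 90 for `U(n)`: `U = W̄ W⁻¹`. -/
theorem exists_unitary_conjM_eq_mul {U : Matrix (Fin n) (Fin n) ℂ} (hU : Uᴴ * U = 1)
    (hUU : U * conjM U = 1) : ∃ W : Matrix (Fin n) (Fin n) ℂ, Wᴴ * W = 1 ∧ conjM W = U * W := by
  obtain ⟨V, hV, hVU⟩ := exists_isUnit_det_conjM_eq_mul hUU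
  have hUt : Uᵀ = U := by
    rw [← conjM_conjTranspose, left_inv_eq_right_inv hU hUU, conjM_conjM]
  have hP : conjM (Vᴴ * V) = Vᴴ * V := by
    rw [conjM_mul, conjM_conjTranspose, hVU, ← transpose_conjM V, hVU, transpose_mul, hUt,
      Matrix.mul_assoc]
  obtain ⟨T, hT⟩ := exists_unitary_mul_map_ofReal hV hP
  exact ⟨V * T.map ofRealHom, hT, by rw [conjM_mul, conjM_map_ofReal, hVU, Matrix.mul_assoc]⟩

theorem exists_tau_mul_inv_eq_of_act_iId {k : SpMat n} (hk : k ∈ symplecticGroup (Fin n) ℝ)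
    (hfix : act k (iId n) = iId n) (hc : k * tau k = 1) :
    ∃ h ∈ symplecticGroup (Fin n) ℝ, k = tau h * h⁻¹ := by
  obtain ⟨U, rfl⟩ := exists_realBlocks_eq_of_act_iId hk hfix
  have hUU : U * conjM U = 1 :=
    realBlocks_injective (by rw [realBlocks_mul, ← tau_realBlocks, hc, realBlocks_one])
  obtain ⟨W, hW, hWU⟩ :=
    exists_unitary_conjM_eq_mul (realBlocks_mem_symplecticGroup_iff.mp hk) hUU
  have hWW : W * Wᴴ = 1 := mul_eq_one_comm.mp hW
  have hinv : (realBlocks W)⁻¹ = realBlocks Wᴴ :=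
    inv_eq_right_inv (by rw [← realBlocks_mul, hWW, realBlocks_one])
  refine ⟨realBlocks W, realBlocks_mem_symplecticGroup_iff.mpr hW, ?_⟩
  rw [tau_realBlocks, hinv, ← realBlocks_mul, hWU, Matrix.mul_assoc, hWW, Matrix.mul_one]

theorem act_tau_mul_inv_act_iId {h : SpMat n} (hh : h ∈ symplecticGroup (Fin n) ℝ) :
    act (tau h * h⁻¹) (act h (iId n)) = -conjM (act h (iId n)) := by
  rw [act_mul _ (SymplecticGroup.inv_mem hh) (act_mem_Siegel hh iId_mem_Siegel),
    ← act_mul _ hh iId_mem_Siegel, nonsing_inv_mul _ (SymplecticGroup.symplectic_det hh), act_one,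
    ← act_tau_neg_conjM, neg_conjM_iId]

theorem tau_mul_tau_mul_inv_mul_inv (g h : SpMat n) :
    tau g * (tau h * h⁻¹) * g⁻¹ = tau (g * h) * (g * h)⁻¹ := by
  rw [tau_mul, Matrix.mul_inv_rev]
  noncomm_ring

theorem exists_tau_mul_inv_eq_of_act_eq_neg_conjM {γ : SpMat n}
    (hγ : γ ∈ symplecticGroup (Fin n) ℝ) (hc : γ * tau γ = 1) {Z : Matrix (Fin n) (Fin n) ℂ}
    (hZ : Z ∈ Siegel n) (hact : act γ Z = -conjM Z) :
    ∃ h ∈ symplecticGroup (Fin n) ℝ, γ = tau h * h⁻¹ := by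
  obtain ⟨h₀, hh₀, rfl⟩ := exists_act_iId_eq hZ
  have hτ := tau_mem hh₀
  have hτdet := SymplecticGroup.symplectic_det hτ
  have hdet := SymplecticGroup.symplectic_det hh₀
  set k := (tau h₀)⁻¹ * γ * h₀
  have hk : k ∈ symplecticGroup (Fin n) ℝ :=
    mul_mem (mul_mem (SymplecticGroup.inv_mem hτ) hγ) hh₀
  have hfix : act k (iId n) = iId n := by
    rw [act_mul _ hh₀ iId_mem_Siegel, act_mul _ hγ (act_mem_Siegel hh₀ iId_mem_Siegel), hact,
      ← act_tau_neg_conjM, neg_conjM_iId, ← act_mul _ hτ iId_mem_Siegel,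
      nonsing_inv_mul _ hτdet, act_one]
  have hkc : k * tau k = 1 := by
    simp only [k, tau_mul, tau_inv, tau_tau]
    calc (tau h₀)⁻¹ * γ * h₀ * (h₀⁻¹ * tau γ * tau h₀)
        = (tau h₀)⁻¹ * (γ * (h₀ * h₀⁻¹) * tau γ) * tau h₀ := by noncomm_ring
      _ = 1 := by
        rw [mul_nonsing_inv _ hdet, Matrix.mul_one, hc, Matrix.mul_one, nonsing_inv_mul _ hτdet]
  obtain ⟨h, hh, hkh⟩ := exists_tau_mul_inv_eq_of_act_iId hk hfix hkc
  refine ⟨h₀ * h, mul_mem hh₀ hh, ?_⟩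
  rw [← tau_mul_tau_mul_inv_mul_inv, ← hkh, ← Matrix.mul_assoc (tau h₀),
    mul_nonsing_inv_cancel_right _ _ hdet, mul_nonsing_inv_cancel_left _ _ hτdet]

end

/-- A cocycle γ is a coboundary iff it has a real point in the Siegel space. -/
theorem coboundary_iff_real_point (n : ℕ) (γ : SpMat n) (hγ : γ ∈ Sp n)
    (hc : γ * tau γ = 1) :
    (∃ h ∈ Sp n, γ = tau h * h⁻¹) ↔ ∃ Z ∈ Siegel n, act γ Z = -(conjM Z) := by
  simp only [mem_Sp_iff] at hγ ⊢
  constructor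
  · rintro ⟨h, hh, rfl⟩
    exact ⟨act h (iId n), act_mem_Siegel hh iId_mem_Siegel, act_tau_mul_inv_act_iId hh⟩
  · rintro ⟨Z, hZ, hact⟩
    exact exists_tau_mul_inv_eq_of_act_eq_neg_conjM hγ hc hZ hact
end
end

section
/- If g ∈ Sp(2n,ℤ) satisfies g ≡ I mod 2m, then τ(g)·g ≡ I mod 4m. -/
open Matrix

/-- 2n×2n integer matrices in n×n block form. -/
abbrev SpMatZ (n : ℕ) := Matrix (Fin n ⊕ Fin n) (Fin n ⊕ Fin n) ℤ

/-- The standard symplectic form J = [[0,I],[-I,0]] over ℤ. -/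
def JZ (n : ℕ) : SpMatZ n := fromBlocks 0 1 (-1) 0

/-- I₋ = diag(-Iₙ, Iₙ) over ℤ. -/
def IminusZ (n : ℕ) : SpMatZ n := fromBlocks (-1) 0 0 1

/-- The integral symplectic group Sp(2n,ℤ). -/
def SpZ (n : ℕ) : Set (SpMatZ n) := {g | gᵀ * JZ n * g = JZ n}

/-- The involution τ(g) = I₋ g I₋. -/
def tauZ {n : ℕ} (g : SpMatZ n) : SpMatZ n := IminusZ n * g * IminusZ n

/-- The sign function: -1 on the first block, +1 on the second. -/
def epsZ (n : ℕ) : Fin n ⊕ Fin n → ℤ := Sum.elim (fun _ => -1) (fun _ => 1)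

lemma IminusZ_eq_diagonal (n : ℕ) : IminusZ n = diagonal (epsZ n) := by
  ext i j
  rcases i with i | i <;> rcases j with j | j <;>
    simp [IminusZ, epsZ, diagonal_apply, Matrix.one_apply] <;>
    aesop

lemma IminusZ_mul_self (n : ℕ) : IminusZ n * IminusZ n = 1 := by
  rw [IminusZ_eq_diagonal, diagonal_mul_diagonal]
  ext i j
  rcases i with i | i <;> simp [epsZ, diagonal_apply, Matrix.one_apply]

/-- If g ≡ I (mod 2m) in Sp(2n,ℤ) then τ(g)·g ≡ I (mod 4m). -/
theorem tau_mul_self_congruence (n : ℕ) (g : SpMatZ n) (hg : g ∈ SpZ n) (m : ℤ)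
    (hcong : ∀ i j, (2 * m) ∣ (g - 1) i j) :
    ∀ i j, (4 * m) ∣ (tauZ g * g - 1) i j := by
  have hII := IminusZ_mul_self n
  have hconj : IminusZ n * (g - 1) * IminusZ n = tauZ g - 1 := by
    simp [tauZ, mul_sub, sub_mul, hII]
  have key : tauZ g * g - 1 =
      IminusZ n * (g - 1) * IminusZ n * (g - 1)
        + (IminusZ n * (g - 1) * IminusZ n + (g - 1)) := by
    rw [hconj]; noncomm_ring
  intro i j
  rw [key]
  rw [Matrix.add_apply]
  apply dvd_add
  · -- product term, divisible by 4m²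
    rw [IminusZ_eq_diagonal]
    rw [Matrix.mul_apply]
    apply Finset.dvd_sum
    intro k _
    simp only [Matrix.mul_diagonal, Matrix.diagonal_mul]
    obtain ⟨a, ha⟩ := hcong i k
    obtain ⟨b, hb⟩ := hcong k j
    rw [ha, hb]
    exact ⟨epsZ n i * a * epsZ n k * (m * b), by ring⟩
  · -- diagonal-block term
    rw [IminusZ_eq_diagonal]
    rw [Matrix.add_apply]
    simp only [Matrix.mul_diagonal, Matrix.diagonal_mul]
    obtain ⟨a, ha⟩ := hcong i j
    simp only [Matrix.sub_apply] at ha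
    rcases i with i | i <;> rcases j with j | j <;>
      simp [epsZ] <;>
      exact ⟨a, by linarith⟩
end

section
/- Let k ≥ 2 and let A ∈ GL(n,ℤ) satisfy A ≡ I mod 2 and A² ≡ I mod 2^{k+1}. Then there exists p ∈ GL(n,ℤ) such that p⁻¹Ap is congruent mod 2^k to a diagonal matrix with entries ±1. -/
open Matrix

/-!
Write `A = 1 + 2 B`. As `A² ≡ 1 (mod 8)`, `B` is idempotent modulo 2, so over `𝔽₂` it is
conjugate to a diagonal `0/1` matrix, and the conjugating matrix lifts to `GL(n, ℤ)` because
`GL(n, 𝔽₂)` is generated by transvections. Thus `A` is conjugate to `D + 4 M`, `D = diagonal ε`.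

A congruence `A = D + 2^j N` with `2 ≤ j < k` is then improved to one modulo `2^(j+1)`. Let `X`
be the block of `N` in rows with `ε = 1` and columns with `ε = -1`. Then `X² = 0` and
`D X - X D = 2 X`, so conjugating by `1 + 2^(j-1) X` replaces `N` by `N - X` modulo 2; the
opposite block is treated in the same way. In the diagonal blocks `ε a = ε b`,
the congruence `A² ≡ 1 (mod 2^(j+2))` reads `2^(j+1) ε a N a b ≡ 0`, because `N²` only
contributes multiples of `2^(2j)`.
-/

section Ring

variable {R : Type*} [Ring R]

theorem one_add_smul_mul_mul_one_sub_smul {D X : R} (hDX : D * X = X) (hXD : X * D = -X)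
    (hXX : X * X = 0) (c : ℤ) (N : R) :
    (1 + c • X) * (D + N) * (1 - c • X) =
      D + N - (2 * c) • X + c • (X * N - N * X) - c ^ 2 • (X * N * X) := by
  simp only [mul_add, add_mul, mul_sub, one_mul, mul_one, smul_mul_assoc, mul_smul_comm,
    hDX, hXD, neg_mul, hXX, smul_neg, smul_zero, neg_zero]
  module

theorem isConj_one_add_smul_mul_mul {X : R} (hXX : X * X = 0) (c : ℤ) (a : R) :
    IsConj a ((1 + c • X) * a * (1 - c • X)) := by
  have hsq : (c • X) * (c • X) = 0 := by rw [smul_mul_smul_comm, hXX, smul_zero]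
  have h₁ : (1 + c • X) * (1 - c • X) = 1 := by
    rw [add_mul, one_mul, mul_sub, mul_one, hsq]; abel
  have h₂ : (1 - c • X) * (1 + c • X) = 1 := by
    rw [sub_mul, one_mul, mul_add, mul_one, hsq]; abel
  refine ⟨⟨1 + c • X, 1 - c • X, h₁, h₂⟩, ?_⟩
  change (1 + c • X) * a = (1 + c • X) * a * (1 - c • X) * (1 + c • X)
  rw [mul_assoc _ (1 - c • X), h₂, mul_one]

theorem IsConj.exists_mul_self_eq_one_add_smul {a b : R} (h : IsConj a b) {c : ℤ} {s : R}
    (hs : a * a = 1 + c • s) : ∃ t, b * b = 1 + c • t := by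
  obtain ⟨u, hu⟩ := h
  have hb : b = u * a * ↑u⁻¹ := by rw [hu.eq, mul_assoc, Units.mul_inv, mul_one]
  refine ⟨u * s * ↑u⁻¹, ?_⟩
  calc b * b = u * (a * a) * ↑u⁻¹ := by simp only [hb, mul_assoc, Units.inv_mul_cancel_left]
    _ = 1 + c • (u * s * ↑u⁻¹) := by
      rw [hs, mul_add, add_mul, mul_one, Units.mul_inv, mul_smul_comm, smul_mul_assoc]

end Ring

namespace Matrix

section IntMatrix

variable {ι : Type*}

theorem exists_eq_smul_of_forall_dvd {d : ℤ} {X : Matrix ι ι ℤ} (h : ∀ a b, d ∣ X a b) :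
    ∃ Y, X = d • Y :=
  ⟨of fun a b => X a b / d, ext fun a b => (Int.mul_ediv_cancel' (h a b)).symm⟩

theorem map_intCast_zmod_eq_zero_iff {n : ℕ} {X : Matrix ι ι ℤ} :
    X.map (Int.cast : ℤ → ZMod n) = 0 ↔ ∃ Y, X = (n : ℤ) • Y := by
  refine ⟨fun h => exists_eq_smul_of_forall_dvd fun a b =>
    (ZMod.intCast_zmod_eq_zero_iff_dvd _ n).mp (congrFun (congrFun h a) b), ?_⟩
  rintro ⟨Y, rfl⟩
  ext a b
  exact (ZMod.intCast_zmod_eq_zero_iff_dvd _ n).mpr (dvd_mul_right _ _)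

end IntMatrix

variable {ι : Type*} [Fintype ι] [DecidableEq ι]

theorem exists_isConj_diagonal_of_isIdempotentElem {K : Type*} [Field K] {e : Matrix ι ι K}
    (he : IsIdempotentElem e) : ∃ d : ι → K, IsConj e (diagonal d) := by
  classical
  set f : Module.End K (ι → K) := toLin' e
  have hff : ∀ x, f (f x) = f x := fun x => by
    simp only [f, toLin'_apply, mulVec_mulVec, he.eq]
  have htop : ⨆ μ, f.eigenspace μ = ⊤ := by
    refine eq_top_iff.mpr fun x _ => ?_
    have h₁ : f x ∈ f.eigenspace 1 := Module.End.mem_eigenspace_iff.mpr (by rw [hff, one_smul])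
    have h₀ : x - f x ∈ f.eigenspace 0 :=
      Module.End.mem_eigenspace_iff.mpr (by rw [map_sub, hff, sub_self, zero_smul])
    rw [← add_sub_cancel (f x) x]
    exact add_mem (Submodule.mem_iSup_of_mem 1 h₁) (Submodule.mem_iSup_of_mem 0 h₀)
  have hint := DirectSum.isInternal_submodule_of_iSupIndep_of_iSup_eq_top
    f.eigenspaces_iSupIndep htop
  let v := hint.collectedBasis fun μ => Module.finBasis K (f.eigenspace μ)
  let σ := v.indexEquiv (Pi.basisFun K ι)
  let w := v.reindex σ
  have hw : ∀ i, e *ᵥ w i = (σ.symm i).1 • w i := fun i => by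
    rw [← toLin'_apply, v.reindex_apply]
    exact Module.End.mem_eigenspace_iff.mp (hint.collectedBasis_mem _ _)
  let b := Pi.basisFun K ι
  refine ⟨fun i => (σ.symm i).1, isConj_comm.mp
    ⟨⟨b.toMatrix w, w.toMatrix b, b.toMatrix_mul_toMatrix_flip w,
      w.toMatrix_mul_toMatrix_flip b⟩, ?_⟩⟩
  change b.toMatrix w * diagonal _ = e * b.toMatrix w
  ext a i
  have hb : ∀ k, b.toMatrix w k i = w i k := fun k => by
    rw [Module.Basis.toMatrix_apply, Pi.basisFun_repr]
  have := congrFun (hw i) a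
  rw [mulVec, dotProduct, Pi.smul_apply, smul_eq_mul] at this
  rw [mul_diagonal, mul_apply, hb]
  simp only [hb]
  rw [this, mul_comm]

theorem GeneralLinearGroup.map_intCast_zmod_two_surjective :
    Function.Surjective (GeneralLinearGroup.map (n := ι) (Int.castRingHom (ZMod 2))) := by
  intro g
  let IsReduction (M : Matrix ι ι (ZMod 2)) : Prop :=
    ∃ G : GL ι ℤ, (GeneralLinearGroup.map (Int.castRingHom (ZMod 2)) G : Matrix ι ι (ZMod 2)) = M
  obtain ⟨G, hG⟩ : IsReduction g := by
    refine diagonal_transvection_induction_of_det_ne_zero IsReduction g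
      (g.isUnit.map detMonoidHom).ne_zero (fun D hD => ⟨1, ?_⟩) (fun t => ?_)
      (fun A B _ _ ⟨G, hG⟩ ⟨H, hH⟩ => ⟨G * H, by simp [hG, hH]⟩)
    · have h01 : ∀ x : ZMod 2, x ≠ 0 → x = 1 := by decide
      rw [det_diagonal, Finset.prod_ne_zero_iff] at hD
      have : D = 1 := funext fun i => h01 _ (hD i (Finset.mem_univ i))
      simp [this]
    · let t' : TransvectionStruct ι ℤ := ⟨t.i, t.j, t.hij, t.c.val⟩
      refine ⟨⟨t'.toMatrix, t'.inv.toMatrix, t'.mul_inv, t'.inv_mul⟩, ?_⟩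
      ext a b
      simp [t', TransvectionStruct.toMatrix, transvection, GeneralLinearGroup.map_apply,
        one_apply, single]
  exact ⟨G, Units.ext hG⟩

end Matrix

section ModFour

variable {ι : Type*} [Fintype ι] [DecidableEq ι]

theorem isIdempotentElem_map_of_mul_self_eq {A B₀ S : Matrix ι ι ℤ} (hA : A = 1 + (2 : ℤ) • B₀)
    (hsq : A * A = 1 + (2 ^ 3 : ℤ) • S) :
    IsIdempotentElem (B₀.map (Int.cast : ℤ → ZMod 2)) := by
  have expand : (1 + (2 : ℤ) • B₀) * (1 + (2 : ℤ) • B₀) = 1 + (2 ^ 2 : ℤ) • (B₀ * B₀ + B₀) := by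
    simp only [add_mul, mul_add, one_mul, mul_one, smul_mul_assoc, mul_smul_comm, smul_add,
      smul_smul]
    module
  rw [hA, expand, add_right_inj, show (2 ^ 3 : ℤ) = 2 ^ 2 * 2 by norm_num, ← smul_smul] at hsq
  set ρ := (Int.castRingHom (ZMod 2)).mapMatrix (m := ι)
  have h0 : ρ B₀ * ρ B₀ + ρ B₀ = 0 := by
    rw [← map_mul, ← map_add, smul_right_injective _ (by norm_num) hsq]
    exact map_intCast_zmod_eq_zero_iff.mpr ⟨S, rfl⟩
  change ρ B₀ * ρ B₀ = ρ B₀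
  rw [eq_neg_of_add_eq_zero_left h0]
  ext i j
  exact ZMod.neg_eq_self_mod_two _

theorem exists_isConj_diagonal_add_four_smul {A B₀ S : Matrix ι ι ℤ} (hA : A = 1 + (2 : ℤ) • B₀)
    (hsq : A * A = 1 + (2 ^ 3 : ℤ) • S) :
    ∃ ε : ι → ℤ, (∀ i, ε i = 1 ∨ ε i = -1) ∧
      ∃ B, IsConj A B ∧ ∃ M, B = diagonal ε + (2 ^ 2 : ℤ) • M := by
  obtain ⟨d, u, hu⟩ :=
    exists_isConj_diagonal_of_isIdempotentElem (isIdempotentElem_map_of_mul_self_eq hA hsq)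
  obtain ⟨G, rfl⟩ := GeneralLinearGroup.map_intCast_zmod_two_surjective u
  set Δ : Matrix ι ι ℤ := diagonal fun i => ((d i).val : ℤ)
  obtain ⟨W, hW⟩ : ∃ W, (G : Matrix ι ι ℤ) * B₀ + Δ * G = (2 : ℤ) • W := by
    refine map_intCast_zmod_eq_zero_iff (n := 2).mp ?_
    set ρ := (Int.castRingHom (ZMod 2)).mapMatrix (m := ι)
    have hΔ : ρ Δ = diagonal d := by simp [ρ, Δ]
    have hG : ρ G = ↑(GeneralLinearGroup.map (Int.castRingHom (ZMod 2)) G) := rfl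
    have hB₀ : ρ B₀ = B₀.map Int.cast := rfl
    change ρ _ = 0
    rw [map_add, map_mul, map_mul, hΔ, hG, hB₀, hu]
    ext a b
    exact CharTwo.add_self_eq_zero _
  refine ⟨fun i => 1 - 2 * (d i).val, fun i => ?_, _, ⟨G, ?_⟩,
    W * ((G⁻¹ : GL ι ℤ) : Matrix ι ι ℤ), rfl⟩
  · have := (d i).val_lt
    dsimp only
    omega
  · have hGB : (G : Matrix ι ι ℤ) * B₀ = (2 : ℤ) • W - Δ * G := eq_sub_of_add_eq hW
    have hε : diagonal (fun i => 1 - 2 * ((d i).val : ℤ)) = 1 - (2 : ℤ) • Δ := by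
      ext a b
      by_cases h : a = b <;>
        simp only [Δ, Matrix.sub_apply, Matrix.smul_apply, diagonal_apply, one_apply, h, if_true,
          if_false, smul_eq_mul, mul_zero, sub_zero]
    change (G : Matrix ι ι ℤ) * A = (_ + _) * G
    rw [hA, mul_add, mul_one, mul_smul_comm, hGB, hε, add_mul, smul_mul_assoc, mul_assoc W,
      G.inv_mul, mul_one, sub_mul, one_mul, smul_mul_assoc]
    module

end ModFour

section Lifting

variable {ι : Type*}

def signCorner (ε : ι → ℤ) (M : Matrix ι ι ℤ) : Matrix ι ι ℤ :=
  of fun a b => if ε a = 1 ∧ ε b = -1 then M a b else 0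

theorem signCorner_neg (ε : ι → ℤ) (M : Matrix ι ι ℤ) : signCorner ε (-M) = -signCorner ε M := by
  ext a b
  by_cases h : ε a = 1 ∧ ε b = -1 <;> simp [signCorner, h]

theorem neg_diagonal_add_smul [DecidableEq ι] (ε : ι → ℤ) (c : ℤ) (M : Matrix ι ι ℤ) :
    -(diagonal ε + c • M) = diagonal (-ε) + c • -M := by
  rw [neg_add, diagonal_neg, smul_neg]
  rfl

variable [Fintype ι]

theorem signCorner_mul_signCorner (ε : ι → ℤ) (M N : Matrix ι ι ℤ) :
    signCorner ε M * signCorner ε N = 0 := by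
  ext a b
  refine Finset.sum_eq_zero fun c _ => ?_
  by_cases h : ε c = 1 <;> simp [signCorner, h]

variable [DecidableEq ι]

theorem diagonal_mul_signCorner (ε : ι → ℤ) (M : Matrix ι ι ℤ) :
    diagonal ε * signCorner ε M = signCorner ε M := by
  ext a b
  by_cases h : ε a = 1 ∧ ε b = -1 <;> simp [signCorner, h]

theorem signCorner_mul_diagonal (ε : ι → ℤ) (M : Matrix ι ι ℤ) :
    signCorner ε M * diagonal ε = -signCorner ε M := by
  ext a b
  by_cases h : ε a = 1 ∧ ε b = -1 <;> simp [signCorner, h]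

theorem exists_isConj_sub_signCorner (ε : ι → ℤ) {j : ℕ} (hj : 2 ≤ j) (M : Matrix ι ι ℤ) :
    ∃ Z, IsConj (diagonal ε + (2 ^ j : ℤ) • M)
      (diagonal ε + (2 ^ j : ℤ) • (M - signCorner ε M + (2 : ℤ) • Z)) := by
  obtain ⟨i, rfl⟩ : ∃ i, j = i + 2 := ⟨j - 2, by omega⟩
  set X := signCorner ε M
  refine ⟨(2 ^ i : ℤ) • (X * M - M * X) - (2 ^ (2 * i + 1) : ℤ) • (X * M * X), ?_⟩
  convert isConj_one_add_smul_mul_mul (signCorner_mul_signCorner ε M M) (2 ^ (i + 1))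
    (diagonal ε + (2 ^ (i + 2) : ℤ) • M) using 1
  rw [one_add_smul_mul_mul_one_sub_smul (diagonal_mul_signCorner ε M)
    (signCorner_mul_diagonal ε M) (signCorner_mul_signCorner ε M M)]
  simp only [mul_smul_comm, smul_mul_assoc]
  module

theorem exists_isConj_offDiagonalBlocks_even {ε : ι → ℤ} (hε : ∀ i, ε i = 1 ∨ ε i = -1)
    {j : ℕ} (hj : 2 ≤ j) (M : Matrix ι ι ℤ) :
    ∃ N, IsConj (diagonal ε + (2 ^ j : ℤ) • M) (diagonal ε + (2 ^ j : ℤ) • N) ∧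
      ∀ a b, ε a ≠ ε b → 2 ∣ N a b := by
  obtain ⟨Z₁, h₁⟩ := exists_isConj_sub_signCorner ε hj M
  -- the opposite block is the `signCorner` of `-ε`, used on `-(diagonal ε + 2 ^ j • M₁)`
  set M₁ := M - signCorner ε M + (2 : ℤ) • Z₁
  obtain ⟨Z₂, u, hu⟩ := exists_isConj_sub_signCorner (-ε) hj (-M₁)
  refine ⟨M₁ - signCorner (-ε) M₁ - (2 : ℤ) • Z₂, h₁.trans ⟨u, ?_⟩, fun a b hab => ?_⟩
  · rw [← SemiconjBy.neg_right_iff, neg_diagonal_add_smul, neg_diagonal_add_smul]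
    convert hu using 3
    rw [signCorner_neg]
    abel
  · obtain ⟨ha, hb⟩ | ⟨ha, hb⟩ : (ε a = 1 ∧ ε b = -1) ∨ (ε a = -1 ∧ ε b = 1) := by
      rcases hε a with ha | ha <;> rcases hε b with hb | hb <;> simp_all
    all_goals
      simp only [M₁, Matrix.sub_apply, Matrix.add_apply, Matrix.smul_apply, smul_eq_mul,
        signCorner, of_apply, Pi.neg_apply, ha, hb]
      norm_num <;> omega

theorem diagonal_mul_self_of_sign {ε : ι → ℤ} (hε : ∀ i, ε i = 1 ∨ ε i = -1) :
    diagonal ε * diagonal ε = 1 := by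
  rw [diagonal_mul_diagonal, ← diagonal_one]
  congr 1
  funext i
  rcases hε i with h | h <;> simp [h]

theorem two_dvd_apply_of_mul_self_eq {ε : ι → ℤ} (hε : ∀ i, ε i = 1 ∨ ε i = -1) {j : ℕ}
    (hj : 2 ≤ j) {N S : Matrix ι ι ℤ}
    (h : (diagonal ε + (2 ^ j : ℤ) • N) * (diagonal ε + (2 ^ j : ℤ) • N) =
      1 + (2 ^ (j + 2) : ℤ) • S)
    {a b : ι} (hab : ε a = ε b) : 2 ∣ N a b := by
  obtain ⟨i, rfl⟩ : ∃ i, j = i + 2 := ⟨j - 2, by omega⟩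
  have hsq : (diagonal ε + (2 ^ (i + 2) : ℤ) • N) * (diagonal ε + (2 ^ (i + 2) : ℤ) • N) =
      1 + (2 ^ (i + 2) : ℤ) • (diagonal ε * N + N * diagonal ε + (2 ^ (i + 2) : ℤ) • (N * N)) := by
    simp only [add_mul, mul_add, smul_mul_assoc, mul_smul_comm, diagonal_mul_self_of_sign hε,
      smul_add]
    abel
  have hab' := congrFun (congrFun (hsq.symm.trans h) a) b
  simp only [Matrix.add_apply, Matrix.smul_apply, smul_eq_mul, diagonal_mul, mul_diagonal, hab,
    add_right_inj] at hab'
  rw [pow_add _ (i + 2) 2, mul_assoc,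
    show (2 : ℤ) ^ (i + 2) * (N * N) a b = 4 * (2 ^ i * (N * N) a b) by ring] at hab'
  have key := mul_left_cancel₀ (pow_ne_zero (i + 2) two_ne_zero) hab'
  generalize 2 ^ i * (N * N) a b = q at key
  rcases hε b with h | h <;> rw [h] at key <;> omega

theorem exists_isConj_diagonal_add_pow_succ_smul {ε : ι → ℤ} (hε : ∀ i, ε i = 1 ∨ ε i = -1)
    {j : ℕ} (hj : 2 ≤ j) {M S : Matrix ι ι ℤ}
    (hsq : (diagonal ε + (2 ^ j : ℤ) • M) * (diagonal ε + (2 ^ j : ℤ) • M) =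
      1 + (2 ^ (j + 2) : ℤ) • S) :
    ∃ B, IsConj (diagonal ε + (2 ^ j : ℤ) • M) B ∧
      ∃ M', B = diagonal ε + (2 ^ (j + 1) : ℤ) • M' := by
  obtain ⟨N, hconj, hoff⟩ := exists_isConj_offDiagonalBlocks_even hε hj M
  obtain ⟨S', hS'⟩ := hconj.exists_mul_self_eq_one_add_smul hsq
  obtain ⟨N', hN'⟩ := exists_eq_smul_of_forall_dvd (X := N) fun a b =>
    if hab : ε a = ε b then two_dvd_apply_of_mul_self_eq hε hj hS' hab else hoff a b hab
  exact ⟨_, hconj, N', by rw [hN', smul_smul, ← pow_succ]⟩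

theorem exists_isConj_diagonal_add_pow_smul {ε : ι → ℤ} (hε : ∀ i, ε i = 1 ∨ ε i = -1) {K : ℕ}
    {A : Matrix ι ι ℤ} (hA : ∃ M, A = diagonal ε + (2 ^ 2 : ℤ) • M)
    (hsq : ∃ S, A * A = 1 + (2 ^ (K + 1) : ℤ) • S) {j : ℕ} (h2j : 2 ≤ j) (hjK : j ≤ K) :
    ∃ B, IsConj A B ∧ ∃ M, B = diagonal ε + (2 ^ j : ℤ) • M := by
  induction j, h2j using Nat.le_induction with
  | base => exact ⟨A, IsConj.refl A, hA⟩
  | succ j hj ih =>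
    obtain ⟨B, hAB, M, rfl⟩ := ih (by omega)
    obtain ⟨S, hS⟩ := hsq
    obtain ⟨T, hT⟩ := hAB.exists_mul_self_eq_one_add_smul hS
    obtain ⟨C, hBC, hC⟩ := exists_isConj_diagonal_add_pow_succ_smul hε hj
      (S := (2 ^ (K - (j + 1)) : ℤ) • T) (by rw [hT, smul_smul, ← pow_add]; congr 3; omega)
    exact ⟨C, hAB.trans hBC, hC⟩

end Lifting

theorem diagonalize_involution_mod_2k_general (n k : ℕ) (hk : 2 ≤ k)
    (A : Matrix (Fin n) (Fin n) ℤ)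
    (h2 : ∀ i j, (2 : ℤ) ∣ (A - 1) i j)
    (h2k : ∀ i j, ((2 : ℤ) ^ (k + 1)) ∣ (A * A - 1) i j) :
    ∃ p : Matrix (Fin n) (Fin n) ℤ, IsUnit p.det ∧
      ∃ ε : Fin n → ℤ, (∀ i, ε i = 1 ∨ ε i = -1) ∧
        ∀ i j, ((2 : ℤ) ^ k) ∣ (p⁻¹ * A * p - diagonal ε) i j := by
  obtain ⟨B₀, hB₀⟩ := exists_eq_smul_of_forall_dvd h2
  obtain ⟨S, hS⟩ := exists_eq_smul_of_forall_dvd h2k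
  have hA : A = 1 + (2 : ℤ) • B₀ := eq_add_of_sub_eq' hB₀
  have hsq : A * A = 1 + (2 ^ (k + 1) : ℤ) • S := eq_add_of_sub_eq' hS
  obtain ⟨ε, hε, A₁, hAA₁, hA₁⟩ := exists_isConj_diagonal_add_four_smul hA
    (S := (2 ^ (k - 2) : ℤ) • S) (by rw [hsq, smul_smul, ← pow_add]; congr 3; omega)
  obtain ⟨B, hA₁B, M, rfl⟩ := exists_isConj_diagonal_add_pow_smul hε hA₁
    (hAA₁.exists_mul_self_eq_one_add_smul hsq) hk le_rfl
  obtain ⟨u, hu⟩ := hAA₁.trans hA₁B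
  have hinv : (↑u⁻¹ : Matrix (Fin n) (Fin n) ℤ)⁻¹ = u := inv_eq_left_inv u.mul_inv
  refine ⟨↑u⁻¹, (isUnit_iff_isUnit_det _).mp u⁻¹.isUnit, ε, hε, fun i j => ⟨M i j, ?_⟩⟩
  rw [hinv, hu.eq, mul_assoc, u.mul_inv, mul_one, add_sub_cancel_left, Matrix.smul_apply,
    smul_eq_mul]

/-- If A ∈ GL(n,ℤ) satisfies A ≡ I (mod 2) and A² ≡ I (mod 2^(k+1)) for k ≥ 2, then
A is GL(n,ℤ)-conjugate, mod 2^k, to a diagonal matrix with entries ±1. -/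
theorem diagonalize_involution_mod_2k (n k : ℕ) (hk : 2 ≤ k)
    (A : Matrix (Fin n) (Fin n) ℤ) (hA : IsUnit A.det)
    (h2 : ∀ i j, (2 : ℤ) ∣ (A - 1) i j)
    (h2k : ∀ i j, ((2 : ℤ) ^ (k + 1)) ∣ (A * A - 1) i j) :
    ∃ p : Matrix (Fin n) (Fin n) ℤ, IsUnit p.det ∧
      ∃ ε : Fin n → ℤ, (∀ i, ε i = 1 ∨ ε i = -1) ∧
        ∀ i j, ((2 : ℤ) ^ k) ∣ (p⁻¹ * A * p - diagonal ε) i j :=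
  diagonalize_involution_mod_2k_general n k hk A h2 h2k
end

section
/- Let ω = e^{2πi/3} be the third root of unity in the upper half plane 𝔥₁. Then there is no γ ∈ Γ(2) ⊂ SL(2,ℤ) with γ·ω = -conj(ω), where the action is by fractional linear transformations. In other words, ω is not Γ(2)-real. -/
/-!
Since `ω² + ω + 1 = 0` and `|ω| = 1`, we have `-conj ω = -ω² = ω + 1`. For `γ = [[a, b], [c, d]]` the
equation `γ·ω = ω + 1` becomes `aω + b = (ω + 1)(cω + d) = dω + (d - c)`, and as `ω` is not real this
forces `b = d - c`. For `γ ≡ I mod 2` the left side is even and the right side odd.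
-/

open Matrix

noncomputable section

/-- ω = e^{2πi/3}. -/
def omega : ℂ := Complex.exp (2 * Real.pi * Complex.I / 3)

lemma isPrimitiveRoot_omega : IsPrimitiveRoot omega 3 := by
  simpa [omega] using Complex.isPrimitiveRoot_exp 3 (by norm_num)

lemma omega_sq_add_omega_add_one : omega ^ 2 + omega + 1 = 0 := by
  have h := isPrimitiveRoot_omega.geom_sum_eq_zero (by norm_num)
  simp only [Finset.sum_range_succ, Finset.sum_range_zero, pow_zero, pow_one, zero_add] at h
  linear_combination h

lemma neg_conj_omega : -(starRingEnd ℂ) omega = omega + 1 := by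
  have hnorm : ‖omega‖ = 1 := isPrimitiveRoot_omega.norm'_eq_one (by norm_num)
  have hne : omega ≠ 0 := isPrimitiveRoot_omega.ne_zero (by norm_num)
  rw [← Complex.inv_eq_conj hnorm]
  field_simp
  linear_combination -omega_sq_add_omega_add_one

/-- `x² + x + 1` has no real root. -/
lemma omega_im_ne_zero : omega.im ≠ 0 := by
  intro him
  have hreal : omega = (omega.re : ℂ) := Complex.ext rfl (by simpa using him)
  have h := omega_sq_add_omega_add_one
  rw [hreal] at h
  have : omega.re ^ 2 + omega.re + 1 = 0 := by exact_mod_cast h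
  nlinarith [sq_nonneg (omega.re + 1 / 2)]

lemma Complex.eq_and_eq_of_mul_add_eq_mul_add {z : ℂ} (hz : z.im ≠ 0) {a b c d : ℝ}
    (h : a * z + b = c * z + d) : a = c ∧ b = d := by
  have him := congrArg Complex.im h
  have hre := congrArg Complex.re h
  simp only [Complex.add_im, Complex.add_re, Complex.re_ofReal_mul, Complex.im_ofReal_mul,
    Complex.ofReal_re, Complex.ofReal_im, add_zero] at him hre
  have hac : a = c := mul_right_cancel₀ hz him
  exact ⟨hac, by rw [hac] at hre; linarith⟩

lemma mobius_omega_eq_neg_conj_omega_iff {a b c d : ℤ} (hden : (c : ℂ) * omega + d ≠ 0) :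
    ((a : ℂ) * omega + b) / (c * omega + d) = -(starRingEnd ℂ) omega ↔ a = d ∧ b = d - c := by
  have hexpand : (omega + 1) * (c * omega + d) = (d : ℂ) * omega + (d - c : ℤ) := by
    push_cast; linear_combination (c : ℂ) * omega_sq_add_omega_add_one
  rw [neg_conj_omega, div_eq_iff hden, hexpand]
  constructor
  · intro h
    have := Complex.eq_and_eq_of_mul_add_eq_mul_add omega_im_ne_zero
      (a := a) (b := b) (c := d) (d := ((d - c : ℤ) : ℝ)) (by exact_mod_cast h)
    exact_mod_cast this
  · rintro ⟨rfl, rfl⟩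
    rfl

/-- The point ω = e^{2πi/3} of the upper half plane is not Γ(2)-real: no γ ∈ Γ(2)
satisfies γ·ω = -conj(ω). -/
theorem omega_not_gamma_two_real :
    ¬ ∃ γ : Matrix.SpecialLinearGroup (Fin 2) ℤ,
      (∀ i j, (2 : ℤ) ∣ ((γ : Matrix (Fin 2) (Fin 2) ℤ) - 1) i j) ∧
      (((γ : Matrix (Fin 2) (Fin 2) ℤ) 0 0 : ℂ) * omega + ((γ : Matrix (Fin 2) (Fin 2) ℤ) 0 1 : ℂ)) /
          (((γ : Matrix (Fin 2) (Fin 2) ℤ) 1 0 : ℂ) * omega + ((γ : Matrix (Fin 2) (Fin 2) ℤ) 1 1 : ℂ))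
        = -(starRingEnd ℂ) omega := by
  rintro ⟨γ, hmod, heq⟩
  have hb := hmod 0 1
  have hc := hmod 1 0
  have hd := hmod 1 1
  simp only [Matrix.sub_apply, one_apply_eq, one_apply_ne zero_ne_one, one_apply_ne one_ne_zero,
    sub_zero] at hb hc hd
  have hden : ((γ 1 0 : ℤ) : ℂ) * omega + (γ 1 1 : ℤ) ≠ 0 := by
    intro h
    have hd0 : (γ 1 1 : ℝ) = 0 := (Complex.eq_and_eq_of_mul_add_eq_mul_add omega_im_ne_zero
      (a := γ 1 0) (b := γ 1 1) (c := 0) (d := 0) (by simpa using h)).2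
    norm_cast at hd0
    omega
  have hb_eq := ((mobius_omega_eq_neg_conj_omega_iff hden).1 heq).2
  omega
end
end
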